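/- arXiv:1108.0546 — 7 statements merged into one kernel-verified Lean document; each statement's English description precedes it below -/
import Mathlib

section
/- Let p ≥ 3 be a prime, k, m ≥ 1 integers, and c(x) ∈ ℤ[x] a polynomial with integer coefficients. If c(e^{2πi/(p^k m)}) = 1 and |c(e^{2πi/m})| = 1, then c(e^{2πi/m}) = 1. -/
open Polynomial IntermediateField

lemma aux_ringHom_aeval {R S : Type*} [CommRing R] [CommRing S] (φ : R →+* S) (x : R)
    (c : Polynomial ℤ) : φ (aeval x c) = aeval (φ x) c := by
  rw [aeval_def, aeval_def, hom_eval₂]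
  congr 1
  exact RingHom.ext_int _ _

lemma aux_conj_aeval (c : Polynomial ℤ) (z : ℂ) :
    aeval ((starRingEnd ℂ) z) c = (starRingEnd ℂ) (aeval z c) :=
  (aux_ringHom_aeval (starRingEnd ℂ) z c).symm

lemma aux_pow_pred {w : ℂ} {mm : ℕ} (h : w ^ mm = 1) (hm : 1 ≤ mm) :
    w ^ (mm - 1) = (starRingEnd ℂ) w := by
  have habs : ‖w‖ = 1 := by
    exact Complex.norm_eq_one_of_pow_eq_one h (by omega)
  have hw0 : w ≠ 0 := by intro h0; simp [h0] at habs
  have hconj : w * (starRingEnd ℂ) w = 1 := by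
    rw [Complex.mul_conj, ← Complex.sq_norm, habs]; norm_num
  have h1 : w * w ^ (mm - 1) = 1 := by
    rw [← pow_succ', Nat.sub_add_cancel hm]; exact h
  exact mul_left_cancel₀ hw0 (h1.trans hconj.symm)

lemma aux_frob (p k : ℕ) (hp : p.Prime) (c : Polynomial ℤ) :
    ∃ h : Polynomial ℤ, c ^ (p ^ k) - expand ℤ (p ^ k) c = C (p : ℤ) * h := by
  haveI := Fact.mk hp
  have hmap : map (Int.castRingHom (ZMod p)) (c ^ (p ^ k) - expand ℤ (p ^ k) c) = 0 := by
    rw [Polynomial.map_sub, Polynomial.map_pow, Polynomial.map_expand]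
    have := Polynomial.map_iterateFrobenius_expand (p := p) (map (Int.castRingHom (ZMod p)) c) k
    rw [show iterateFrobenius (ZMod p) p k = RingHom.id _ from RingHom.ext_zmod _ _,
      Polynomial.map_id] at this
    rw [this, sub_self]
  have hdvd : C (p : ℤ) ∣ c ^ (p ^ k) - expand ℤ (p ^ k) c := by
    rw [Polynomial.C_dvd_iff_dvd_coeff]
    intro i
    have := congrArg (fun q => Polynomial.coeff q i) hmap
    simp only [Polynomial.coeff_map, Polynomial.coeff_zero] at this
    exact_mod_cast (ZMod.intCast_zmod_eq_zero_iff_dvd _ p).mp this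
  exact hdvd

lemma aux_unit (m : ℕ) (hm : 1 ≤ m) (c : Polynomial ℤ)
    (hdvd : cyclotomic m ℤ ∣ (c * c.comp (X ^ (m - 1)) - 1)) {ξ : ℂ}
    (hξ : IsPrimitiveRoot ξ m) : aeval ξ c * (starRingEnd ℂ) (aeval ξ c) = 1 := by
  have hcyc : aeval ξ (cyclotomic m ℤ) = 0 := by
    have h := hξ.isRoot_cyclotomic (show 0 < m by omega)
    rw [aeval_def, eval₂_eq_eval_map, map_cyclotomic]
    exact h
  obtain ⟨g, hg⟩ := hdvd
  have h0 : aeval ξ (c * c.comp (X ^ (m - 1)) - 1) = 0 := by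
    rw [hg, map_mul, hcyc, zero_mul]
  rw [map_sub, map_mul, map_one, sub_eq_zero, aeval_comp, map_pow, aeval_X,
    aux_pow_pred hξ.pow_eq_one hm, aux_conj_aeval] at h0
  exact h0

theorem stmt_0 (p k m : ℕ) (hp : p.Prime) (hp3 : 3 ≤ p) (hk : 1 ≤ k) (hm : 1 ≤ m)
    (c : Polynomial ℤ)
    (h1 : aeval (Complex.exp (2 * Real.pi * Complex.I / ((p : ℂ) ^ k * (m : ℂ)))) c = 1)
    (h2 : ‖aeval (Complex.exp (2 * Real.pi * Complex.I / (m : ℂ))) c‖ = 1) :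
    aeval (Complex.exp (2 * Real.pi * Complex.I / (m : ℂ))) c = 1 := by
  have hm0 : (m : ℂ) ≠ 0 := Nat.cast_ne_zero.mpr (by omega)
  have hp0 : ((p : ℂ)) ^ k ≠ 0 := pow_ne_zero _ (Nat.cast_ne_zero.mpr hp.pos.ne')
  set n : ℕ := p ^ k * m with hn
  have hn0 : n ≠ 0 := by positivity
  set ζ : ℂ := Complex.exp (2 * Real.pi * Complex.I / ((p : ℂ) ^ k * (m : ℂ))) with hζdef
  have hζ : IsPrimitiveRoot ζ n := by
    have := Complex.isPrimitiveRoot_exp n hn0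
    convert this using 3
    push_cast [hn]
    ring
  set zm : ℂ := Complex.exp (2 * Real.pi * Complex.I / (m : ℂ)) with hzmdef
  have hzmpow : zm = ζ ^ (p ^ k) := by
    rw [hζdef, hzmdef, ← Complex.exp_nat_mul]
    congr 1
    field_simp
    push_cast; ring
  -- the field K = ℚ(ζ)
  have hζQ : IsIntegral ℚ ζ := ⟨X ^ n - C 1, monic_X_pow_sub_C 1 hn0, by
    simp [hζ.pow_eq_one]⟩
  haveI : FiniteDimensional ℚ ℚ⟮ζ⟯ := IntermediateField.adjoin.finiteDimensional hζQ
  set K := ℚ⟮ζ⟯ with hK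
  set x : K := IntermediateField.AdjoinSimple.gen ℚ ζ with hxdef
  have hxζ : algebraMap K ℂ x = ζ := IntermediateField.AdjoinSimple.algebraMap_gen ℚ ζ
  have hinj : Function.Injective (algebraMap K ℂ) := (algebraMap K ℂ).injective
  have hx : IsPrimitiveRoot x n := by
    apply IsPrimitiveRoot.of_map_of_injective (f := (algebraMap K ℂ)) _ hinj
    rwa [hxζ]
  have hxint : IsIntegral ℤ x := ⟨X ^ n - C 1, monic_X_pow_sub_C 1 hn0, by
    simp [hx.pow_eq_one]⟩
  -- α' = c(x^{p^k})
  set α : K := aeval (x ^ p ^ k) c with hαdef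
  have haxc : aeval x c = 1 := by
    apply hinj
    rw [aux_ringHom_aeval (algebraMap K ℂ) x c, hxζ, map_one]
    exact h1
  -- Frobenius congruence
  obtain ⟨hh, hfrob⟩ := aux_frob p k hp c
  set t : K := aeval x hh with htdef
  have hkey : α - 1 = algebraMap ℚ K (-(p : ℚ)) * t := by
    have := congrArg (aeval x) hfrob
    rw [map_sub, map_pow, haxc, one_pow, expand_aeval, map_mul, aeval_C] at this
    rw [← hαdef, ← htdef] at this
    have hcast : (algebraMap ℤ K) (p : ℤ) = algebraMap ℚ K ((p : ℚ)) := by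
      push_cast
      simp
    rw [hcast] at this
    rw [map_neg, neg_mul, ← this]
    ring
  -- cyclotomic m divides c(x)·c(x^{m-1}) - 1
  have hzm : IsPrimitiveRoot zm m := by
    have := Complex.isPrimitiveRoot_exp m (by omega)
    rwa [hzmdef]
  have hzmint : IsIntegral ℤ zm := ⟨X ^ m - C 1, monic_X_pow_sub_C 1 (by omega), by
    simp [hzm.pow_eq_one]⟩
  have hBdvd : cyclotomic m ℤ ∣ (c * c.comp (X ^ (m - 1)) - 1) := by
    rw [cyclotomic_eq_minpoly hzm (by omega)]
    apply minpoly.isIntegrallyClosed_dvd hzmint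
    rw [map_sub, map_mul, map_one, aeval_comp, map_pow, aeval_X,
      aux_pow_pred hzm.pow_eq_one hm, aux_conj_aeval, sub_eq_zero, Complex.mul_conj,
      ← Complex.sq_norm, h2]
    norm_num
  -- norm of α - 1
  set d := Module.finrank ℚ K with hd
  have hd1 : 1 ≤ d := Module.finrank_pos
  have htint : IsIntegral ℤ t :=
    IsIntegral.of_mem_of_fg (Algebra.adjoin ℤ {x}) hxint.fg_adjoin_singleton t
      (Polynomial.aeval_mem_adjoin_singleton ℤ x)
  obtain ⟨z, hz⟩ := (IsIntegrallyClosed.isIntegral_iff (R := ℤ) (K := ℚ)).mp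
    (Algebra.isIntegral_norm ℚ htint)
  have hnormval : Algebra.norm ℚ (α - 1) = (-(p : ℚ)) ^ d * algebraMap ℤ ℚ z := by
    rw [hkey, map_mul, Algebra.norm_algebraMap, hz]
  -- per-embedding bound
  have hσbound : ∀ σ : (↥K) →ₐ[ℚ] ℂ, ‖σ (α - 1)‖ ≤ 2 := by
    intro σ
    have hσinj : Function.Injective σ := σ.toRingHom.injective
    have hσx : IsPrimitiveRoot (σ x) n := hx.map_of_injective hσinj
    have hξ : IsPrimitiveRoot ((σ x) ^ p ^ k) m := hσx.pow (by omega) hn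
    have hunit := aux_unit m hm c hBdvd hξ
    set v : ℂ := aeval ((σ x) ^ p ^ k) c with hv
    have habs1 : ‖v‖ = 1 := by
      have hns : Complex.normSq v = 1 := by
        rw [Complex.mul_conj] at hunit
        exact_mod_cast hunit
      rw [Complex.norm_def, hns, Real.sqrt_one]
    have hσα : σ (α - 1) = v - 1 := by
      rw [map_sub, map_one, hαdef]
      congr 1
      rw [hv, ← map_pow]
      exact aux_ringHom_aeval σ.toRingHom (x ^ p ^ k) c
    rw [hσα]
    calc ‖v - 1‖ ≤ ‖v‖ + ‖(1 : ℂ)‖ := norm_sub_le v 1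
      _ = 2 := by rw [habs1, norm_one]; norm_num
  -- global bound
  have hembs := Algebra.norm_eq_prod_embeddings ℚ (E := ℂ) (α - 1)
  have hbound : ‖algebraMap ℚ ℂ (Algebra.norm ℚ (α - 1))‖ ≤ 2 ^ d := by
    rw [hembs, norm_prod]
    calc (∏ σ : (↥K) →ₐ[ℚ] ℂ, ‖σ (α - 1)‖)
        ≤ ∏ _σ : (↥K) →ₐ[ℚ] ℂ, 2 := by
          apply Finset.prod_le_prod
          · intro i _; exact norm_nonneg _
          · intro i _; exact hσbound i
      _ = 2 ^ d := by
          rw [Finset.prod_const, Finset.card_univ, AlgHom.card]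
  -- conclude z = 0
  have hz0 : z = 0 := by
    by_contra hz0
    have hz1 : (1 : ℝ) ≤ |(z : ℝ)| := by
      have : (1 : ℤ) ≤ |z| := Int.one_le_abs hz0
      exact_mod_cast this
    have hval : ‖algebraMap ℚ ℂ (Algebra.norm ℚ (α - 1))‖
        = (p : ℝ) ^ d * |(z : ℝ)| := by
      rw [hnormval]
      push_cast
      rw [norm_mul, norm_pow]
      simp [abs_of_nonneg, Nat.cast_nonneg]
    rw [hval] at hbound
    have hple : (3 : ℝ) ^ d ≤ (p : ℝ) ^ d := by
      apply pow_le_pow_left₀ (by norm_num)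
      exact_mod_cast hp3
    have h23 : (2 : ℝ) ^ d < 3 ^ d := by
      apply pow_lt_pow_left₀ (by norm_num) (by norm_num)
      omega
    nlinarith [pow_nonneg (show (0:ℝ) ≤ 3 by norm_num) d,
      pow_nonneg (show (0:ℝ) ≤ (p:ℝ) by positivity) d]
  have hν0 : Algebra.norm ℚ (α - 1) = 0 := by
    rw [hnormval, hz0]
    simp
  have hα1 : α = 1 := by
    have := Algebra.norm_eq_zero_iff.mp hν0
    linear_combination this
  -- conclude
  have hfin : aeval zm c = algebraMap K ℂ α := by
    rw [hαdef, aux_ringHom_aeval (algebraMap (↥K) ℂ) (x ^ p ^ k) c, map_pow, hxζ, ← hzmpow]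
  rw [hfin, hα1, map_one]
end

section
/- Let k, m ≥ 1 be integers and c(x) ∈ ℤ[x]. If c(e^{2πi/(2^k m)}) = 1 and |c(e^{2πi/m})| = 1, then c(e^{2πi/m}) = ±1. -/
open Polynomial IntermediateField

lemma comp_sq_int (c : Polynomial ℤ) : ∃ d : Polynomial ℤ, c.comp (X ^ 2) = c ^ 2 + 2 * d := by
  induction c using Polynomial.induction_on with
  | C a =>
      have hev : Even (a ^ 2 - a) := by
        rw [show a ^ 2 - a = (a - 1) * (a - 1 + 1) by ring]
        exact Int.even_mul_succ_self (a - 1)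
      obtain ⟨t, ht⟩ := hev
      refine ⟨-C t, ?_⟩
      rw [C_comp]
      conv_lhs => rw [show a = a ^ 2 + 2 * -t by omega]
      simp only [C_add, C_mul, C_pow, C_neg, map_ofNat]
  | add p q hp hq =>
      obtain ⟨d₁, hd₁⟩ := hp
      obtain ⟨d₂, hd₂⟩ := hq
      exact ⟨d₁ + d₂ - p * q, by rw [add_comp, hd₁, hd₂]; ring⟩
  | monomial n a ih =>
      obtain ⟨d, hd⟩ := ih
      refine ⟨d * X ^ 2, ?_⟩
      have h1 : (C a * X ^ (n + 1)).comp (X ^ 2) = (C a * X ^ n).comp (X ^ 2) * X ^ 2 := by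
        simp [mul_comp, pow_comp, pow_succ]; ring
      rw [h1, hd]; ring

lemma aeval_pow_two_pow {R : Type*} [CommRing R] (c : Polynomial ℤ) (x : R)
    (hx : aeval x c = 1) (j : ℕ) :
    ∃ g ∈ Algebra.adjoin ℤ ({x} : Set R), aeval (x ^ 2 ^ j) c = 1 + 2 * g := by
  induction j with
  | zero => exact ⟨0, Subalgebra.zero_mem _, by simpa using hx⟩
  | succ j ih =>
      obtain ⟨g, hg, hgeq⟩ := ih
      obtain ⟨d, hd⟩ := comp_sq_int c
      set y : R := x ^ 2 ^ j with hy
      have hyS : y ∈ Algebra.adjoin ℤ ({x} : Set R) :=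
        pow_mem (Algebra.self_mem_adjoin_singleton ℤ x) _
      have hdS : aeval y d ∈ Algebra.adjoin ℤ ({x} : Set R) :=
        Algebra.adjoin_le (Set.singleton_subset_iff.2 hyS) (aeval_mem_adjoin_singleton ℤ y)
      refine ⟨g + g + (g ^ 2 + g ^ 2) + aeval y d,
        add_mem (add_mem (add_mem hg hg) (add_mem (pow_mem hg 2) (pow_mem hg 2))) hdS, ?_⟩
      have hstep : x ^ 2 ^ (j + 1) = y ^ 2 := by rw [hy, ← pow_mul, pow_succ]
      have h1 : aeval (x ^ 2 ^ (j + 1)) c = aeval y (c.comp (X ^ 2)) := by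
        rw [aeval_comp]; simp [hstep]
      rw [h1, hd]
      simp only [map_add, map_mul, map_pow, map_ofNat]
      rw [hgeq]; ring

lemma eq_zero_of_norm_le_half {F : Type*} [Field F] [NumberField F] {x : F}
    (hx : IsIntegral ℤ x) (h : ∀ φ : F →+* ℂ, ‖φ x‖ ≤ 1 / 2) : x = 0 := by
  by_contra hx0
  have hn : Algebra.norm ℚ x ≠ 0 := by
    rwa [Ne, Algebra.norm_eq_zero_iff]
  have hint : IsIntegral ℤ (Algebra.norm ℚ x) := Algebra.isIntegral_norm ℚ hx
  obtain ⟨z, hz⟩ := IsIntegrallyClosed.isIntegral_iff.mp hint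
  have hz0 : z ≠ 0 := by rintro rfl; simp at hz; exact hn hz.symm
  have hprod : algebraMap ℚ ℂ (Algebra.norm ℚ x) = ∏ σ : F →ₐ[ℚ] ℂ, σ x :=
    Algebra.norm_eq_prod_embeddings ℚ ℂ x
  haveI : Nonempty (F →ₐ[ℚ] ℂ) := ⟨IsAlgClosed.lift⟩
  have hcard : 0 < Fintype.card (F →ₐ[ℚ] ℂ) := Fintype.card_pos
  have hle : ‖algebraMap ℚ ℂ (Algebra.norm ℚ x)‖ ≤ (1 / 2) ^ Fintype.card (F →ₐ[ℚ] ℂ) := by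
    rw [hprod, norm_prod]
    calc ∏ σ : F →ₐ[ℚ] ℂ, ‖σ x‖ ≤ ∏ _σ : F →ₐ[ℚ] ℂ, (1 / 2 : ℝ) :=
          Finset.prod_le_prod (fun _ _ => norm_nonneg _) (fun σ _ => h σ.toRingHom)
      _ = (1 / 2) ^ Fintype.card (F →ₐ[ℚ] ℂ) := by
          rw [Finset.prod_const, Finset.card_univ]
  have hlt : ((1 : ℝ) / 2) ^ Fintype.card (F →ₐ[ℚ] ℂ) < 1 :=
    pow_lt_one₀ (by norm_num) (by norm_num) hcard.ne'
  have hge : (1 : ℝ) ≤ ‖algebraMap ℚ ℂ (Algebra.norm ℚ x)‖ := by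
    rw [← hz]
    have h2 : (algebraMap ℚ ℂ) ((algebraMap ℤ ℚ) z) = (z : ℂ) := by simp
    rw [h2, Complex.norm_intCast]
    exact_mod_cast Int.one_le_abs hz0
  linarith

lemma abs_eq_one_of_pow_eq_one {u : ℂ} {n : ℕ} (hn : n ≠ 0) (hu : u ^ n = 1) :
    ‖u‖ = 1 := by
  have h1 : ‖u‖ ^ n = 1 := by rw [← norm_pow, hu, norm_one]
  have h0 : (0 : ℝ) ≤ ‖u‖ := norm_nonneg _
  rcases lt_trichotomy ‖u‖ 1 with h | h | h
  · have := pow_lt_one₀ h0 h hn; linarith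
  · exact h
  · have := one_lt_pow₀ h hn; linarith

lemma inv_eq_conj_of_abs_one {u : ℂ} (h : ‖u‖ = 1) :
    u⁻¹ = (starRingEnd ℂ) u := by
  apply inv_eq_of_mul_eq_one_right
  rw [Complex.mul_conj, Complex.normSq_eq_norm_sq, h]
  norm_num

theorem stmt_1 (k m : ℕ) (hk : 1 ≤ k) (hm : 1 ≤ m)
    (c : Polynomial ℤ)
    (h1 : aeval (Complex.exp (2 * Real.pi * Complex.I / ((2 : ℂ) ^ k * (m : ℂ)))) c = 1)
    (h2 : ‖aeval (Complex.exp (2 * Real.pi * Complex.I / (m : ℂ))) c‖ = 1) :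
    aeval (Complex.exp (2 * Real.pi * Complex.I / (m : ℂ))) c = 1 ∨
      aeval (Complex.exp (2 * Real.pi * Complex.I / (m : ℂ))) c = -1 := by
  have hm0 : m ≠ 0 := by omega
  set N : ℕ := 2 ^ k * m with hNdef
  have hN0 : N ≠ 0 := Nat.mul_ne_zero (pow_ne_zero _ two_ne_zero) hm0
  have hNC : ((N : ℕ) : ℂ) = (2 : ℂ) ^ k * (m : ℂ) := by push_cast [hNdef]; ring
  set ζ : ℂ := Complex.exp (2 * Real.pi * Complex.I / N) with hζdef
  have hζprim : IsPrimitiveRoot ζ N := Complex.isPrimitiveRoot_exp N hN0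
  have hζN : ζ ^ N = 1 := hζprim.pow_eq_one
  have hz : ζ ^ 2 ^ k = Complex.exp (2 * Real.pi * Complex.I / m) := by
    rw [hζdef, ← Complex.exp_nat_mul]
    congr 1
    have hm' : (m : ℂ) ≠ 0 := Nat.cast_ne_zero.2 hm0
    have h2' : ((2 : ℂ)) ^ k ≠ 0 := pow_ne_zero _ two_ne_zero
    rw [hNC]
    push_cast
    field_simp
  rw [← hz] at h2 ⊢
  rw [show Complex.exp (2 * Real.pi * Complex.I / ((2 : ℂ) ^ k * (m : ℂ))) = ζ by
    rw [hζdef, hNC]] at h1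
  -- the number field
  have hζintZ : IsIntegral ℤ ζ := hζprim.isIntegral (Nat.pos_of_ne_zero hN0)
  have hζintQ : IsIntegral ℚ ζ := hζintZ.tower_top
  haveI : FiniteDimensional ℚ ℚ⟮ζ⟯ := IntermediateField.adjoin.finiteDimensional hζintQ
  haveI : NumberField ℚ⟮ζ⟯ := ⟨⟩
  set K : IntermediateField ℚ ℂ := ℚ⟮ζ⟯ with hK
  set ζK : K := IntermediateField.AdjoinSimple.gen ℚ ζ with hζK
  have hζKval : (algebraMap K ℂ) ζK = ζ := rfl
  have hmap : ∀ (φ : K →+* ℂ) (x : K), φ (aeval x c) = aeval (φ x) c := by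
    intro φ x
    simpa using (aeval_algHom_apply φ.toIntAlgHom x c).symm
  have hconj : ∀ w : ℂ, aeval ((starRingEnd ℂ) w) c = (starRingEnd ℂ) (aeval w c) := by
    intro w
    simpa using aeval_algHom_apply (starRingEnd ℂ).toIntAlgHom w c
  have hζKN : ζK ^ N = 1 := by
    apply (algebraMap K ℂ).injective
    rw [map_pow, hζKval, hζN, map_one]
  have hζKint : IsIntegral ℤ ζK := by
    refine ⟨X ^ N - C 1, monic_X_pow_sub_C _ hN0, ?_⟩
    simp [hζKN]
  have h1K : aeval ζK c = 1 := by
    apply (algebraMap K ℂ).injective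
    rw [hmap, hζKval, h1, map_one]
  set a : K := aeval (ζK ^ 2 ^ k) c with hadef
  set b : K := aeval ((ζK ^ 2 ^ k)⁻¹) c with hbdef
  have haval : algebraMap K ℂ a = aeval (ζ ^ 2 ^ k) c := by
    rw [hadef, hmap, map_pow, hζKval]
  have hbval : algebraMap K ℂ b = aeval ((ζ ^ 2 ^ k)⁻¹) c := by
    rw [hbdef, hmap, map_inv₀, map_pow, hζKval]
  have habsw : ‖ζ ^ 2 ^ k‖ = 1 := by
    refine abs_eq_one_of_pow_eq_one hm0 ?_
    rw [← pow_mul, ← hNdef]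
    exact hζN
  have hab : a * b = 1 := by
    apply (algebraMap K ℂ).injective
    rw [map_mul, map_one, haval, hbval, inv_eq_conj_of_abs_one habsw, hconj,
      Complex.mul_conj, Complex.normSq_eq_norm_sq, h2]
    norm_num
  have hnorm : ∀ φ : K →+* ℂ, ‖φ a‖ = 1 := by
    intro φ
    have hη : (φ ζK) ^ N = 1 := by rw [← map_pow, hζKN, map_one]
    have hηabs : ‖φ ζK ^ 2 ^ k‖ = 1 := by
      refine abs_eq_one_of_pow_eq_one hm0 ?_
      rw [← pow_mul, ← hNdef]
      exact hη
    have hφa : φ a = aeval (φ ζK ^ 2 ^ k) c := by rw [hadef, hmap, map_pow]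
    have hφb : φ b = (starRingEnd ℂ) (φ a) := by
      rw [hbdef, hmap, map_inv₀, map_pow, inv_eq_conj_of_abs_one hηabs, hconj, ← hφa]
    have hone := congrArg φ hab
    rw [map_mul, map_one, hφb, Complex.mul_conj] at hone
    have hsq : Complex.normSq (φ a) = 1 := by exact_mod_cast hone
    rw [Complex.norm_def, hsq, Real.sqrt_one]
  obtain ⟨g, hgmem, hgeq⟩ := aeval_pow_two_pow c ζK h1K k
  have hgint : IsIntegral ℤ g :=
    IsIntegral.of_mem_of_fg _ hζKint.fg_adjoin_singleton _ hgmem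
  set δ : K := g + g ^ 2 with hδdef
  have hδint : IsIntegral ℤ δ := hgint.add (hgint.pow 2)
  have ha2 : a ^ 2 - 1 = 4 * δ := by rw [hadef, hgeq, hδdef]; ring
  have hδbound : ∀ φ : K →+* ℂ, ‖φ δ‖ ≤ 1 / 2 := by
    intro φ
    have h4 : φ (4 * δ) = φ a ^ 2 - 1 := by rw [← ha2, map_sub, map_pow, map_one]
    have h4' : (4 : ℂ) * φ δ = φ a ^ 2 - 1 := by
      rw [← h4, map_mul, map_ofNat]
    have hb2 : ‖φ a ^ 2 - 1‖ ≤ 2 := by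
      calc ‖φ a ^ 2 - 1‖ ≤ ‖φ a ^ 2‖ + ‖(1 : ℂ)‖ := norm_sub_le _ _
        _ = 2 := by rw [norm_pow, hnorm φ]; norm_num
    have h44 : ‖(4 : ℂ) * φ δ‖ = 4 * ‖φ δ‖ := by rw [norm_mul]; norm_num
    rw [h4'] at h44
    linarith
  have hδ0 : δ = 0 := eq_zero_of_norm_le_half hδint hδbound
  have ha1 : a ^ 2 = 1 := by
    rw [hδ0, mul_zero, sub_eq_zero] at ha2
    exact ha2
  have hα2 : aeval (ζ ^ 2 ^ k) c * aeval (ζ ^ 2 ^ k) c = 1 := by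
    have := congrArg (algebraMap K ℂ) ha1
    rw [map_pow, map_one, haval, sq] at this
    exact this
  exact mul_self_eq_one_iff.mp hα2
end

section
/- Let k, l, m ≥ 1 be integers with l ≠ k, and c(x) ∈ ℤ[x]. If c(e^{2πi/(2^k m)}) = 1, c(e^{2πi/(2^l m)}) = 1, and |c(e^{2πi/m})| = 1, then c(e^{2πi/m}) = 1. -/
open Polynomial Complex IntermediateField

section Aux

private lemma half_exists (c : Polynomial ℤ) :
    ∃ d : Polynomial ℤ, c * c = c.comp (X ^ 2) + 2 * d := by
  have h2 : Fact (Nat.Prime 2) := ⟨Nat.prime_two⟩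
  have key : ∀ i, (2 : ℤ) ∣ (c * c - c.comp (X ^ 2)).coeff i := by
    intro i
    have hmap : (c * c - c.comp (X ^ 2)).map (Int.castRingHom (ZMod 2)) = 0 := by
      have hfrob : (c.map (Int.castRingHom (ZMod 2))).comp (X ^ 2)
          = (c.map (Int.castRingHom (ZMod 2))) ^ 2 := by
        rw [← Polynomial.expand_eq_comp_X_pow]
        have := Polynomial.map_frobenius_expand 2 (c.map (Int.castRingHom (ZMod 2)))
        rwa [ZMod.frobenius_zmod, Polynomial.map_id] at this
      rw [Polynomial.map_sub, Polynomial.map_mul, Polynomial.map_comp, Polynomial.map_pow,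
        Polynomial.map_X, hfrob, ← sq, sub_self]
    have := congrArg (fun p => Polynomial.coeff p i) hmap
    simp only [Polynomial.coeff_map, Polynomial.coeff_zero] at this
    exact_mod_cast (ZMod.intCast_zmod_eq_zero_iff_dvd _ 2).mp this
  obtain ⟨d, hd⟩ := (Polynomial.C_dvd_iff_dvd_coeff (2 : ℤ) _).mpr key
  refine ⟨d, ?_⟩
  have h2C : (2 : Polynomial ℤ) = C 2 := by simp
  rw [h2C]
  linear_combination hd

private lemma cong_exists {ζ : ℂ} {a b : ℕ} (ha : 1 ≤ a) (hab : a < b)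
    (c : Polynomial ℤ) (hB : aeval ζ c = 1) (hA : aeval (ζ ^ 2 ^ (b - a)) c = 1) :
    ∃ e : Polynomial ℤ, aeval (ζ ^ 2 ^ b) c = 1 + 4 * aeval ζ e := by
  obtain ⟨d, hd⟩ := half_exists c
  obtain ⟨d2, hd2⟩ := half_exists d
  have hcompev : ∀ (p : Polynomial ℤ) (j : ℕ), aeval ζ (p.comp (X ^ j)) = aeval (ζ ^ j) p := by
    intro p j; rw [aeval_comp]; simp
  have hrec : ∀ (p : Polynomial ℤ) (q : Polynomial ℤ), p * p = p.comp (X ^ 2) + 2 * q →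
      ∀ j : ℕ, aeval (ζ ^ 2 ^ (j + 1)) p
        = aeval (ζ ^ 2 ^ j) p * aeval (ζ ^ 2 ^ j) p - 2 * aeval (ζ ^ 2 ^ j) q := by
    intro p q hpq j
    have := congrArg (aeval (ζ ^ 2 ^ j)) hpq
    simp only [map_add, map_mul, map_ofNat] at this
    rw [aeval_comp] at this
    have hx : aeval (ζ ^ 2 ^ j) (X ^ 2 : Polynomial ℤ) = ζ ^ 2 ^ (j + 1) := by
      rw [map_pow, aeval_X, ← pow_mul, ← pow_succ]
    rw [hx] at this
    linear_combination -this
  have hchain : ∀ j : ℕ, ∃ p : Polynomial ℤ,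
      aeval (ζ ^ 2 ^ (j + 1)) c = 1 - 2 * aeval (ζ ^ 2 ^ j) d + 4 * aeval ζ p := by
    intro j
    induction j with
    | zero =>
      refine ⟨0, ?_⟩
      have h := hrec c d hd 0
      simp only [pow_zero, pow_one] at h ⊢
      rw [h, hB, map_zero]; ring
    | succ j ih =>
      obtain ⟨p, hp⟩ := ih
      refine ⟨(d.comp (X ^ 2 ^ j)) * (d.comp (X ^ 2 ^ j)) - d.comp (X ^ 2 ^ j)
        + 2 * p + 4 * (p * p) - 4 * ((d.comp (X ^ 2 ^ j)) * p), ?_⟩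
      have h := hrec c d hd (j + 1)
      rw [h, hp]
      simp only [map_add, map_sub, map_mul, map_ofNat, hcompev]
      ring
  have hstart : ∃ q : Polynomial ℤ, aeval (ζ ^ 2 ^ (b - a - 1)) d = 2 * aeval ζ q := by
    obtain ⟨p, hp⟩ := hchain (b - a - 1)
    have he : b - a - 1 + 1 = b - a := by omega
    rw [he, hA] at hp
    exact ⟨p, by linear_combination (1/2 : ℂ) * hp⟩
  have hprop : ∀ i : ℕ, ∃ q : Polynomial ℤ,
      aeval (ζ ^ 2 ^ (b - a - 1 + i)) d = 2 * aeval ζ q := by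
    intro i
    induction i with
    | zero => simpa using hstart
    | succ i ih =>
      obtain ⟨q, hq⟩ := ih
      refine ⟨2 * (q * q) - d2.comp (X ^ 2 ^ (b - a - 1 + i)), ?_⟩
      have h := hrec d d2 hd2 (b - a - 1 + i)
      have he : b - a - 1 + i + 1 = b - a - 1 + (i + 1) := by omega
      rw [he] at h
      rw [h, hq]
      simp only [map_sub, map_mul, map_ofNat, hcompev]
      ring
  obtain ⟨q, hq⟩ := hprop a
  have he2 : b - a - 1 + a = b - 1 := by omega
  rw [he2] at hq
  obtain ⟨p, hp⟩ := hchain (b - 1)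
  have he3 : b - 1 + 1 = b := by omega
  rw [he3] at hp
  refine ⟨p - q, ?_⟩
  rw [hp, hq]
  simp only [map_sub]
  ring

private lemma hom_aeval {A B : Type*} [CommRing A] [CommRing B] (f : A →+* B) (x : A)
    (p : Polynomial ℤ) : f (aeval x p) = aeval (f x) p := by
  rw [aeval_def, aeval_def, Polynomial.hom_eval₂]
  congr 1
  exact RingHom.ext_int _ _

private lemma aeval_conj (c : Polynomial ℤ) (x : ℂ) :
    (starRingEnd ℂ) (aeval x c) = aeval ((starRingEnd ℂ) x) c :=
  hom_aeval (starRingEnd ℂ) x c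

private lemma conj_of_pow_root {m : ℕ} (hm : 0 < m) {ξ : ℂ} (hξ : ξ ^ m = 1) :
    (starRingEnd ℂ) ξ = ξ ^ (m - 1) := by
  have habs : ‖ξ‖ = 1 := Complex.norm_eq_one_of_pow_eq_one hξ hm.ne'
  have h1 : ξ * (starRingEnd ℂ) ξ = 1 := by
    rw [Complex.mul_conj, Complex.normSq_eq_norm_sq, habs]; norm_num
  have h2 : ξ * ξ ^ (m - 1) = 1 := by
    rw [← pow_succ', Nat.sub_add_cancel hm]; exact hξ
  have hξ0 : ξ ≠ 0 := by
    intro h; rw [h] at h1; simp at h1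
  exact mul_left_cancel₀ hξ0 (h1.trans h2.symm)

private lemma abs_conj_roots {m : ℕ} (hm : 0 < m) (c : Polynomial ℤ)
    (h3 : ‖aeval (Complex.exp (2 * Real.pi * Complex.I / (m : ℂ))) c‖ = 1)
    {ξ : ℂ} (hξ : IsPrimitiveRoot ξ m) : ‖aeval ξ c‖ = 1 := by
  set α := Complex.exp (2 * Real.pi * Complex.I / (m : ℂ)) with hα_def
  have hα : IsPrimitiveRoot α m := Complex.isPrimitiveRoot_exp m hm.ne'
  set g : Polynomial ℤ := c * c.comp (X ^ (m - 1)) - 1 with hg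
  have haevalg : ∀ y : ℂ, y ^ m = 1 →
      aeval y g = aeval y c * (starRingEnd ℂ) (aeval y c) - 1 := by
    intro y hy
    rw [hg, map_sub, map_mul, map_one, aeval_comp, _root_.aeval_conj, conj_of_pow_root hm hy]
    simp
  have hroot : aeval α g = 0 := by
    rw [haevalg α hα.pow_eq_one, Complex.mul_conj, Complex.normSq_eq_norm_sq, h3]
    norm_num
  have hroot' : aeval ξ g = 0 := by
    have hmin : cyclotomic m ℚ = minpoly ℚ α := Polynomial.cyclotomic_eq_minpoly_rat hα hm
    obtain ⟨q, hq⟩ : minpoly ℚ α ∣ g.map (algebraMap ℤ ℚ) :=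
      minpoly.dvd ℚ α (by rw [aeval_map_algebraMap]; exact hroot)
    have hcyc : aeval ξ (cyclotomic m ℚ) = 0 := by
      rw [aeval_def, eval₂_eq_eval_map, Polynomial.map_cyclotomic]
      exact hξ.isRoot_cyclotomic hm
    have : aeval ξ (g.map (algebraMap ℤ ℚ)) = 0 := by rw [hq, map_mul, ← hmin, hcyc, zero_mul]
    rwa [aeval_map_algebraMap] at this
  rw [haevalg ξ hξ.pow_eq_one] at hroot'
  have : aeval ξ c * (starRingEnd ℂ) (aeval ξ c) = 1 := by linear_combination hroot'
  rw [Complex.mul_conj, Complex.normSq_eq_norm_sq] at this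
  have this2 : ‖aeval ξ c‖ ^ 2 = 1 := by exact_mod_cast this
  have h := norm_nonneg (aeval ξ c)
  nlinarith [sq_nonneg (‖aeval ξ c‖ - 1), sq_nonneg (‖aeval ξ c‖ + 1)]

private lemma multiset_prod_abs_le {s : Multiset ℂ} (h : ∀ r ∈ s, ‖r‖ ≤ 1 / 2) :
    ‖s.prod‖ ≤ (1 / 2 : ℝ) ^ Multiset.card s := by
  induction s using Multiset.induction with
  | empty => simp
  | cons a s ih =>
    rw [Multiset.prod_cons, norm_mul, Multiset.card_cons, pow_succ']
    have ha := h a (Multiset.mem_cons_self a s)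
    have hs := ih (fun r hr => h r (Multiset.mem_cons_of_mem hr))
    exact mul_le_mul ha hs (norm_nonneg _) (by norm_num)

private lemma endgame {N : ℕ} (hN : 0 < N) {ζ : ℂ} (hζ : IsPrimitiveRoot ζ N) (e : Polynomial ℤ)
    (hbound : ∀ ξ : ℂ, IsPrimitiveRoot ξ N → ‖aeval ξ e‖ ≤ 1 / 2) :
    aeval ζ e = 0 := by
  haveI : NeZero ((N : ℂ)) := ⟨Nat.cast_ne_zero.mpr hN.ne'⟩
  have hζint : IsIntegral ℤ ζ := hζ.isIntegral hN
  have hζQ : IsIntegral ℚ ζ := hζint.tower_top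
  let K : IntermediateField ℚ ℂ := ℚ⟮ζ⟯
  haveI : FiniteDimensional ℚ K := IntermediateField.adjoin.finiteDimensional hζQ
  haveI : NumberField K := ⟨⟩
  let ζK : K := IntermediateField.AdjoinSimple.gen ℚ ζ
  have hcoe : algebraMap K ℂ ζK = ζ := rfl
  have hKint : Function.Injective (algebraMap K ℂ) := (algebraMap K ℂ).injective
  have hζKint : IsIntegral ℤ ζK := by
    rw [← isIntegral_algebraMap_iff hKint, hcoe]; exact hζint
  set γ : K := aeval ζK e with hγ
  have hγcoe : algebraMap K ℂ γ = aeval ζ e := by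
    rw [hγ, hom_aeval (algebraMap K ℂ) ζK e, hcoe]
  have hγint : IsIntegral ℤ γ := by
    have hmem : γ ∈ Algebra.adjoin ℤ ({ζK} : Set K) := by
      rw [Algebra.adjoin_singleton_eq_range_aeval]; exact ⟨e, rfl⟩
    have hle : Algebra.adjoin ℤ ({ζK} : Set K) ≤ integralClosure ℤ K :=
      Algebra.adjoin_le (by rintro x rfl; exact hζKint)
    exact hle hmem
  have hγQ : IsIntegral ℚ γ := hγint.tower_top
  have hroots : ∀ r ∈ ((minpoly ℚ γ).map (algebraMap ℚ ℂ)).roots, ‖r‖ ≤ 1 / 2 := by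
    intro r hr
    have hrs : r ∈ (minpoly ℚ γ).rootSet ℂ := by
      rw [Polynomial.mem_rootSet]
      refine ⟨minpoly.ne_zero hγQ, ?_⟩
      rw [Polynomial.aeval_def, Polynomial.eval₂_eq_eval_map]
      exact (Polynomial.isRoot_of_mem_roots hr)
    rw [← NumberField.Embeddings.range_eval_eq_rootSet_minpoly K ℂ γ] at hrs
    obtain ⟨φ, hφ⟩ := hrs
    have hr' : r = aeval (φ ζK) e := by
      rw [← hφ]; exact hom_aeval φ ζK e
    have hξ : IsPrimitiveRoot (φ ζK) N := by
      have hcycζ : aeval ζK (cyclotomic N ℤ) = 0 := by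
        apply hKint
        rw [hom_aeval (algebraMap K ℂ) ζK, map_zero, hcoe,
          aeval_def, eval₂_eq_eval_map, Polynomial.map_cyclotomic]
        exact hζ.isRoot_cyclotomic hN
      have hcycξ : Polynomial.IsRoot (cyclotomic N ℂ) (φ ζK) := by
        have : aeval (φ ζK) (cyclotomic N ℤ) = 0 := by
          rw [← hom_aeval φ ζK, hcycζ, map_zero]
        rwa [aeval_def, eval₂_eq_eval_map, Polynomial.map_cyclotomic] at this
      exact (Polynomial.isRoot_cyclotomic_iff).mp hcycξ
    rw [hr']
    exact hbound _ hξ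
  have hmineq : minpoly ℚ γ = (minpoly ℤ γ).map (algebraMap ℤ ℚ) :=
    minpoly.isIntegrallyClosed_eq_field_fractions ℚ K hγint
  set P : Polynomial ℂ := (minpoly ℚ γ).map (algebraMap ℚ ℂ) with hP
  have hmonic : P.Monic := (minpoly.monic hγQ).map _
  have hsplits : P.Splits :=
    IsAlgClosed.splits P
  have hprod : P.coeff 0 = (-1) ^ P.natDegree * P.roots.prod :=
    hsplits.coeff_zero_eq_prod_roots_of_monic hmonic
  have hcard : P.roots.card = P.natDegree := (Polynomial.splits_iff_card_roots).mp hsplits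
  have hdeg : 1 ≤ P.natDegree := by
    rw [hP, Polynomial.natDegree_map]
    exact minpoly.natDegree_pos hγQ
  have habs : ‖P.coeff 0‖ ≤ (1 / 2 : ℝ) ^ P.natDegree := by
    rw [hprod, norm_mul, norm_pow, norm_neg, norm_one, one_pow, one_mul, ← hcard]
    exact multiset_prod_abs_le hroots
  have hcoeffint : P.coeff 0 = ((minpoly ℤ γ).coeff 0 : ℂ) := by
    rw [hP, hmineq, Polynomial.coeff_map, Polynomial.coeff_map]
    simp
  have hzero : ((minpoly ℤ γ).coeff 0 : ℤ) = 0 := by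
    by_contra h
    have h1 : (1 : ℝ) ≤ ‖P.coeff 0‖ := by
      rw [hcoeffint, Complex.norm_intCast]
      exact_mod_cast Int.one_le_abs h
    have h2 : (1 / 2 : ℝ) ^ P.natDegree ≤ 1 / 2 :=
      pow_le_of_le_one (by norm_num) (by norm_num) (by omega)
    linarith
  have hc0 : (minpoly ℚ γ).coeff 0 = 0 := by
    rw [hmineq, Polynomial.coeff_map, hzero]; simp
  have : γ = 0 := (minpoly.coeff_zero_eq_zero hγQ).mp hc0
  rw [← hγcoe, this, map_zero]

private lemma root_pow {b j m : ℕ} (hm : 0 < m) (hj : j ≤ b) :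
    (Complex.exp (2 * Real.pi * Complex.I / ((2 : ℂ) ^ b * m))) ^ (2 ^ (b - j))
      = Complex.exp (2 * Real.pi * Complex.I / ((2 : ℂ) ^ j * m)) := by
  rw [← Complex.exp_nat_mul]
  congr 1
  have hm' : (m : ℂ) ≠ 0 := Nat.cast_ne_zero.mpr hm.ne'
  have h2 : (2 : ℂ) ^ b = 2 ^ (b - j) * 2 ^ j := by
    rw [← pow_add]; congr 1; omega
  have h2j : (2 : ℂ) ^ j ≠ 0 := pow_ne_zero _ two_ne_zero
  have h2bj : (2 : ℂ) ^ (b - j) ≠ 0 := pow_ne_zero _ two_ne_zero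
  push_cast
  rw [h2]
  field_simp

private lemma key {a b m : ℕ} (ha : 1 ≤ a) (hab : a < b) (hm : 1 ≤ m)
    (c : Polynomial ℤ)
    (hA : aeval (Complex.exp (2 * Real.pi * Complex.I / ((2 : ℂ) ^ a * (m : ℂ)))) c = 1)
    (hB : aeval (Complex.exp (2 * Real.pi * Complex.I / ((2 : ℂ) ^ b * (m : ℂ)))) c = 1)
    (h3 : ‖aeval (Complex.exp (2 * Real.pi * Complex.I / (m : ℂ))) c‖ = 1) :
    aeval (Complex.exp (2 * Real.pi * Complex.I / (m : ℂ))) c = 1 := by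
  set N : ℕ := 2 ^ b * m with hN_def
  have hN : 0 < N := by positivity
  set ζ : ℂ := Complex.exp (2 * Real.pi * Complex.I / ((2 : ℂ) ^ b * m)) with hζ_def
  have hζcast : ((N : ℂ)) = (2 : ℂ) ^ b * m := by rw [hN_def]; push_cast; ring
  have hζ : IsPrimitiveRoot ζ N := by
    have := Complex.isPrimitiveRoot_exp N hN.ne'
    rwa [hζcast] at this
  -- point identifications
  have hpm : ∀ ξ : ℂ, ξ = Complex.exp (2 * Real.pi * Complex.I / ((2 : ℂ) ^ b * m)) →
      ξ ^ 2 ^ b = Complex.exp (2 * Real.pi * Complex.I / (m : ℂ)) := by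
    intro ξ hξeq
    rw [hξeq]
    have := root_pow (b := b) (j := 0) hm (Nat.zero_le b)
    simpa using this
  have hα : ζ ^ 2 ^ b = Complex.exp (2 * Real.pi * Complex.I / (m : ℂ)) := hpm ζ rfl
  have hAp : aeval (ζ ^ 2 ^ (b - a)) c = 1 := by
    rw [hζ_def, root_pow hm hab.le]; exact hA
  obtain ⟨e, he⟩ := cong_exists ha hab c hB hAp
  -- the transfer polynomial
  set G : Polynomial ℤ := c.comp (X ^ 2 ^ b) - 1 - 4 * e with hG
  have hGval : ∀ ξ : ℂ, aeval ξ G = aeval (ξ ^ 2 ^ b) c - 1 - 4 * aeval ξ e := by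
    intro ξ
    rw [hG]
    simp only [map_sub, map_mul, map_one, map_ofNat, aeval_comp]
    simp
  have hGζ : aeval ζ G = 0 := by rw [hGval, he]; ring
  -- bound at all primitive N-th roots
  have hbound : ∀ ξ : ℂ, IsPrimitiveRoot ξ N → ‖aeval ξ e‖ ≤ 1 / 2 := by
    intro ξ hξ
    have hGξ : aeval ξ G = 0 := by
      have hmin : cyclotomic N ℚ = minpoly ℚ ζ := Polynomial.cyclotomic_eq_minpoly_rat hζ hN
      obtain ⟨q, hq⟩ : minpoly ℚ ζ ∣ G.map (algebraMap ℤ ℚ) :=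
        minpoly.dvd ℚ ζ (by rw [aeval_map_algebraMap]; exact hGζ)
      have hcyc : aeval ξ (cyclotomic N ℚ) = 0 := by
        rw [aeval_def, eval₂_eq_eval_map, Polynomial.map_cyclotomic]
        exact hξ.isRoot_cyclotomic hN
      have : aeval ξ (G.map (algebraMap ℤ ℚ)) = 0 := by
        rw [hq, map_mul, ← hmin, hcyc, zero_mul]
      rwa [aeval_map_algebraMap] at this
    have hprim : IsPrimitiveRoot (ξ ^ 2 ^ b) m := hξ.pow hN hN_def
    have habs1 : ‖aeval (ξ ^ 2 ^ b) c‖ = 1 := abs_conj_roots hm c h3 hprim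
    have heq : 4 * aeval ξ e = aeval (ξ ^ 2 ^ b) c - 1 := by
      have := hGval ξ
      rw [hGξ] at this
      linear_combination this
    have : ‖4 * aeval ξ e‖ ≤ 2 := by
      rw [heq]
      calc ‖aeval (ξ ^ 2 ^ b) c - 1‖
          ≤ ‖aeval (ξ ^ 2 ^ b) c‖ + ‖(1 : ℂ)‖ := by
            apply (norm_sub_le _ _).trans; simp
        _ = 2 := by rw [habs1]; norm_num
    rw [norm_mul] at this
    have h4 : ‖(4 : ℂ)‖ = 4 := by norm_num
    rw [h4] at this
    linarith
  have he0 : aeval ζ e = 0 := endgame hN hζ e hbound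
  rw [← hα, he, he0]
  ring

end Aux

theorem stmt_2 (k l m : ℕ) (hk : 1 ≤ k) (hl : 1 ≤ l) (hm : 1 ≤ m) (hlk : l ≠ k)
    (c : Polynomial ℤ)
    (h1 : aeval (Complex.exp (2 * Real.pi * Complex.I / ((2 : ℂ) ^ k * (m : ℂ)))) c = 1)
    (h2 : aeval (Complex.exp (2 * Real.pi * Complex.I / ((2 : ℂ) ^ l * (m : ℂ)))) c = 1)
    (h3 : ‖aeval (Complex.exp (2 * Real.pi * Complex.I / (m : ℂ))) c‖ = 1) :
    aeval (Complex.exp (2 * Real.pi * Complex.I / (m : ℂ))) c = 1 := by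
  rcases lt_or_gt_of_ne hlk with h | h
  · exact key hl h hm c h2 h1 h3
  · exact key hk h hm c h1 h2 h3
end

section
/- For any root of unity λ ∈ ℂ, the set of elements of the ring ℤ[λ] having absolute value 1 is exactly {±λ^k | k ∈ ℤ}. -/
open Polynomial IntermediateField

private lemma aeval_ringHom_comm {A B : Type*} [CommRing A] [CommRing B]
    (φ : A →+* B) (x : A) (g : Polynomial ℤ) :
    φ (Polynomial.aeval x g) = Polynomial.aeval (φ x) g := by
  rw [Polynomial.aeval_def, Polynomial.aeval_def, Polynomial.hom_eval₂]
  congr 1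
  exact Subsingleton.elim _ _

private lemma abs_eq_one_of_pow {x : ℂ} {n : ℕ} (hn : 0 < n) (h : x ^ n = 1) :
    ‖x‖ = 1 := by
  have h1 : ‖x‖ ^ n = 1 := by rw [← norm_pow, h, norm_one]
  have h0 : 0 ≤ ‖x‖ := norm_nonneg x
  rcases lt_trichotomy ‖x‖ 1 with hl | he | hg
  · nlinarith [pow_lt_one₀ h0 hl hn.ne']
  · exact he
  · nlinarith [one_lt_pow₀ hg hn.ne']

private lemma conj_eq_pow {x : ℂ} {n : ℕ} (hn : 0 < n) (h : x ^ n = 1) :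
    (starRingEnd ℂ) x = x ^ (n - 1) := by
  have hx0 : x ≠ 0 := fun h0 => by simp [h0, zero_pow hn.ne'] at h
  have hsq : Complex.normSq x = 1 := by
    have h1 := abs_eq_one_of_pow hn h
    rw [← Complex.sq_norm, h1]; norm_num
  have h2 : x * (starRingEnd ℂ) x = 1 := by rw [Complex.mul_conj, hsq]; norm_num
  have h3 : x * x ^ (n - 1) = 1 := by rw [mul_comm, ← pow_succ, Nat.sub_add_cancel hn, h]
  exact mul_left_cancel₀ hx0 (h2.trans h3.symm)

theorem stmt_3 (z : ℂ) (hz : ∃ n : ℕ, 0 < n ∧ z ^ n = 1) :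
    {w : ℂ | (∃ g : Polynomial ℤ, Polynomial.aeval z g = w) ∧ ‖w‖ = 1}
      = {w : ℂ | ∃ k : ℤ, w = z ^ k ∨ w = -z ^ k} := by
  obtain ⟨n, hn, hzn⟩ := hz
  have hz0 : z ≠ 0 := fun h0 => by simp [h0, zero_pow hn.ne'] at hzn
  have habs : ‖z‖ = 1 := abs_eq_one_of_pow hn hzn
  ext w
  simp only [Set.mem_setOf_eq]
  constructor
  · rintro ⟨⟨g, hg⟩, hw1⟩
    -- setup
    have hfin : IsOfFinOrder z := isOfFinOrder_iff_pow_eq_one.2 ⟨n, hn, hzn⟩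
    have hmpos : 0 < orderOf z := hfin.orderOf_pos
    set m : ℕ := orderOf z with hmdef
    haveI : NeZero m := ⟨hmpos.ne'⟩
    have hzm : IsPrimitiveRoot z m := IsPrimitiveRoot.orderOf z
    have hzi : IsIntegral ℤ z := hzm.isIntegral hmpos
    have hziQ : IsIntegral ℚ z := hzi.tower_top
    let K : IntermediateField ℚ ℂ := ℚ⟮z⟯
    haveI : FiniteDimensional ℚ K := IntermediateField.adjoin.finiteDimensional hziQ
    haveI : NumberField K := ⟨⟩
    let Z : K := AdjoinSimple.gen ℚ z
    have hinj : Function.Injective (algebraMap K ℂ) := (algebraMap K ℂ).injective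
    have hZz : algebraMap K ℂ Z = z := IntermediateField.AdjoinSimple.algebraMap_gen ℚ z
    have hZ : IsPrimitiveRoot Z m :=
      IsPrimitiveRoot.of_map_of_injective (by rwa [hZz]) hinj
    -- the element W and its "conjugate" W'
    set W : K := aeval Z g with hWdef
    have hWw : algebraMap K ℂ W = w := by
      rw [← hg, hWdef, aeval_ringHom_comm (algebraMap K ℂ) Z g, hZz]
    set g' : Polynomial ℤ := g.comp (X ^ (n - 1)) with hg'def
    set W' : K := aeval Z g' with hW'def
    have hZn : Z ^ n = 1 := by
      apply hinj; rw [map_pow, hZz, hzn, map_one]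
    have hpsi : ∀ ψ : K →+* ℂ, ψ W' = (starRingEnd ℂ) (ψ W) := by
      intro ψ
      have hyn : (ψ Z) ^ n = 1 := by rw [← map_pow, hZn, map_one]
      have h1 : ψ W = aeval (ψ Z) g := aeval_ringHom_comm ψ Z g
      have h2 : ψ W' = aeval ((ψ Z) ^ (n - 1)) g := by
        rw [hW'def, aeval_ringHom_comm ψ Z g', hg'def, aeval_comp, map_pow, aeval_X]
      rw [h1, h2, ← conj_eq_pow hn hyn]
      exact (aeval_ringHom_comm (starRingEnd ℂ) (ψ Z) g).symm
    have hWW' : W * W' = 1 := by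
      apply hinj
      rw [map_mul, map_one, hpsi (algebraMap K ℂ), hWw, Complex.mul_conj]
      rw [show Complex.normSq w = 1 by rw [← Complex.sq_norm, hw1]; norm_num]
      norm_num
    -- integrality of W
    have hWi : IsIntegral ℤ W := by
      have hwi : IsIntegral ℤ w := by
        rw [← hg]
        have hmem : aeval z g ∈ Algebra.adjoin ℤ ({z} : Set ℂ) := by
          rw [Algebra.adjoin_singleton_eq_range_aeval]; exact ⟨g, rfl⟩
        have hle : Algebra.adjoin ℤ ({z} : Set ℂ) ≤ integralClosure ℤ ℂ :=
          Algebra.adjoin_le (by rintro x hx; rw [Set.mem_singleton_iff] at hx; subst hx; exact hzi)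
        exact hle hmem
      exact (isIntegral_algebraMap_iff hinj).1 (by rwa [hWw])
    -- all embeddings have norm 1
    have hnorm : ∀ φ : K →+* ℂ, ‖φ W‖ = 1 := by
      intro φ
      have h1 : φ W * (starRingEnd ℂ) (φ W) = 1 := by rw [← hpsi φ, ← map_mul, hWW', map_one]
      rw [Complex.mul_conj] at h1
      have h2 : Complex.normSq (φ W) = 1 := by exact_mod_cast h1
      rw [Complex.norm_def, h2, Real.sqrt_one]
    obtain ⟨N, hN, hWN⟩ := NumberField.Embeddings.pow_eq_one_of_norm_eq_one K ℂ hWi hnorm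
    have hWfin : IsOfFinOrder W := isOfFinOrder_iff_pow_eq_one.2 ⟨N, hN, hWN⟩
    -- cyclotomic extension instance
    haveI hcyc : IsCyclotomicExtension {m} ℚ K := by
      rw [IsCyclotomicExtension.iff_adjoin_eq_top]
      refine ⟨fun t ht _ => ?_, ?_⟩
      · rw [Set.mem_singleton_iff] at ht
        subst ht
        exact ⟨Z, hZ⟩
      · rw [eq_top_iff]
        have htop : (⊤ : Subalgebra ℚ K) ≤ Algebra.adjoin ℚ ({Z} : Set K) := by
          rintro ⟨x, hx⟩ -
          have hx' : x ∈ Algebra.adjoin ℚ ({z} : Set ℂ) := by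
            rw [← IntermediateField.adjoin_simple_toSubalgebra_of_isAlgebraic hziQ.isAlgebraic]; exact hx
          rw [Algebra.adjoin_singleton_eq_range_aeval] at hx'
          obtain ⟨p, hp⟩ := hx'
          rw [Algebra.adjoin_singleton_eq_range_aeval]
          refine ⟨p, Subtype.ext ?_⟩
          have h1 : ((Polynomial.aeval Z p : K) : ℂ) = Polynomial.aeval z p := by
            have h2 := Polynomial.aeval_algHom_apply (IsScalarTower.toAlgHom ℚ K ℂ) Z p
            simpa [hZz] using h2.symm
          show ((Polynomial.aeval Z p : K) : ℂ) = x
          rw [h1, ← hp]; rfl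
        refine le_trans htop (Algebra.adjoin_mono ?_)
        intro b hb
        rw [Set.mem_singleton_iff] at hb
        subst hb
        exact ⟨m, rfl, hmpos.ne', hZ.pow_eq_one⟩
    rcases Nat.even_or_odd m with hmev | hmodd
    · -- even case : the order of W divides m
      have hWM : IsPrimitiveRoot W (orderOf W) := IsPrimitiveRoot.orderOf W
      have hMpos : 0 < orderOf W := hWfin.orderOf_pos
      have hM2m : orderOf W ∣ 2 * m :=
        IsPrimitiveRoot.dvd_of_isCyclotomicExtension (n := m) hWM hMpos.ne'
      have hMm : orderOf W ∣ m := by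
        by_contra hnd
        have hmlcm : m ∣ Nat.lcm m (orderOf W) := Nat.dvd_lcm_left _ _
        have hlcm2m : Nat.lcm m (orderOf W) ∣ 2 * m :=
          Nat.lcm_dvd (dvd_mul_left m 2) hM2m
        have hlcm_eq : Nat.lcm m (orderOf W) = 2 * m := by
          obtain ⟨d, hd⟩ := hmlcm
          have hdvd2 : d ∣ 2 := by
            have h2 : m * d ∣ m * 2 := by rw [← hd, mul_comm m 2]; exact hlcm2m
            exact (mul_dvd_mul_iff_left hmpos.ne').1 h2
          rcases (Nat.dvd_prime Nat.prime_two).1 hdvd2 with h1 | h1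
          · exfalso
            apply hnd
            have : Nat.lcm m (orderOf W) = m := by rw [hd, h1, mul_one]
            exact this ▸ Nat.dvd_lcm_right m (orderOf W)
          · rw [hd, h1, mul_comm]
        have key := IsPrimitiveRoot.lcm_totient_le_finrank hZ hWM
          (cyclotomic.irreducible_rat (Nat.lcm_pos hmpos hMpos))
        have hfr : Module.finrank ℚ K = m.totient :=
          IsCyclotomicExtension.finrank (n := m) K
            (cyclotomic.irreducible_rat hmpos)
        rw [hfr, hlcm_eq, Nat.totient_mul_of_prime_of_dvd Nat.prime_two hmev.two_dvd] at key
        have hpos := Nat.totient_pos.2 hmpos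
        omega
      obtain ⟨i, -, hi⟩ := hZ.eq_pow_of_pow_eq_one (orderOf_dvd_iff_pow_eq_one.1 hMm)
      refine ⟨(i : ℤ), Or.inl ?_⟩
      rw [zpow_natCast, ← hWw, ← hi, map_pow, hZz]
    · -- odd case
      obtain ⟨r, -, hr⟩ :=
        hZ.exists_pow_or_neg_mul_pow_of_isOfFinOrder (n := m) hmodd hWfin
      rcases hr with hr | hr
      · refine ⟨(r : ℤ), Or.inl ?_⟩
        rw [zpow_natCast, ← hWw, hr, map_pow, hZz]
      · refine ⟨(r : ℤ), Or.inr ?_⟩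
        rw [zpow_natCast, ← hWw, hr, map_neg, map_pow, hZz]
  · rintro ⟨k, hk⟩
    have h0 : (0 : ℤ) < (n : ℤ) := by exact_mod_cast hn
    have hmod : (((k % (n : ℤ)).toNat : ℤ)) = k % (n : ℤ) :=
      Int.toNat_of_nonneg (Int.emod_nonneg k h0.ne')
    have hzpow : z ^ k = z ^ ((k % (n : ℤ)).toNat) := by
      conv_lhs => rw [← Int.mul_ediv_add_emod k (n : ℤ)]
      rw [zpow_add₀ hz0, zpow_mul]
      rw [show (z : ℂ) ^ (n : ℤ) = 1 by rw [zpow_natCast, hzn], one_zpow, one_mul,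
        ← zpow_natCast z ((k % (n : ℤ)).toNat), hmod]
    have habsk : ‖z ^ k‖ = 1 := by
      rw [hzpow, norm_pow, habs, one_pow]
    rcases hk with rfl | rfl
    · exact ⟨⟨X ^ (k % (n : ℤ)).toNat, by rw [map_pow, aeval_X, hzpow]⟩, habsk⟩
    · exact ⟨⟨-(X ^ (k % (n : ℤ)).toNat), by rw [map_neg, map_pow, aeval_X, hzpow]⟩,
        by rw [norm_neg]; exact habsk⟩
end

section
/- Let M be an automorphism of finite order of a finite-dimensional complex vector space V of dimension μ ≥ 2, such that trace(M) = trace(M²) and trace(M) ∈ {1, -1}. Then there is no integer k with M^k = -id. -/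
open Module Polynomial

lemma aux_eigenbasis {V : Type} [AddCommGroup V] [Module ℂ V] [FiniteDimensional ℂ V]
    (f : Module.End ℂ V) {n : ℕ} (hn : 0 < n) (hfn : f ^ n = 1) :
    ∃ (ι : Type) (_ : Fintype ι) (b : Basis ι ℂ V) (d : ι → ℂ),
      ∀ i, f (b i) = d i • b i := by
  have hnc : ((n : ℂ)) ≠ 0 := by exact_mod_cast Nat.cast_ne_zero.mpr hn.ne'
  have hsq : Squarefree (X ^ n - C (1 : ℂ)) :=
    (Polynomial.separable_X_pow_sub_C (1 : ℂ) hnc one_ne_zero).squarefree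
  have haev : aeval f (X ^ n - C (1 : ℂ)) = 0 := by
    simp [map_sub, hfn, sub_self]
  have hss : f.IsSemisimple :=
    Module.End.isSemisimple_of_squarefree_aeval_eq_zero hsq haev
  have htop : ⨆ μ : ℂ, f.eigenspace μ = ⊤ := by
    have h1 := Module.End.iSup_maxGenEigenspace_eq_top f
    have h2 := fun μ : ℂ => hss.isFinitelySemisimple.maxGenEigenspace_eq_eigenspace μ
    simpa only [h2] using h1
  have hind := f.eigenspaces_iSupIndep
  have hint := DirectSum.isInternal_submodule_of_iSupIndep_of_iSup_eq_top hind htop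
  classical
  let v : ∀ μ : ℂ, Basis (Module.Free.ChooseBasisIndex ℂ (f.eigenspace μ)) ℂ (f.eigenspace μ) :=
    fun μ => Module.Free.chooseBasis ℂ (f.eigenspace μ)
  let b := hint.collectedBasis v
  have : Fintype (Σ μ : ℂ, Module.Free.ChooseBasisIndex ℂ (f.eigenspace μ)) :=
    IsNoetherian.fintypeBasisIndex b
  refine ⟨_, this, b, fun x => x.1, fun i => ?_⟩
  have := hint.collectedBasis_mem v i
  exact Module.End.mem_eigenspace_iff.mp this

lemma aux_pow_apply {V : Type} [AddCommGroup V] [Module ℂ V]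
    {ι : Type} (b : Basis ι ℂ V) (f : Module.End ℂ V) (d : ι → ℂ)
    (h : ∀ i, f (b i) = d i • b i) (j : ℕ) (i : ι) :
    (f ^ j) (b i) = d i ^ j • b i := by
  induction j with
  | zero => simp
  | succ m ih =>
    rw [pow_succ, Module.End.mul_apply, h, map_smul, ih, smul_smul, pow_succ, mul_comm]

lemma aux_trace_pow {V : Type} [AddCommGroup V] [Module ℂ V] [FiniteDimensional ℂ V]
    {ι : Type} [Fintype ι] [DecidableEq ι] (b : Basis ι ℂ V) (f : Module.End ℂ V) (d : ι → ℂ)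
    (h : ∀ i, f (b i) = d i • b i) (j : ℕ) :
    LinearMap.trace ℂ V (f ^ j) = ∑ i, d i ^ j := by
  rw [LinearMap.trace_eq_matrix_trace ℂ b]
  have : LinearMap.toMatrix b b (f ^ j) = Matrix.diagonal (fun i => d i ^ j) := by
    ext x y
    rw [LinearMap.toMatrix_apply, aux_pow_apply b f d h, map_smul, Basis.repr_self]
    simp only [Matrix.diagonal, Matrix.of_apply, Finsupp.smul_apply, Finsupp.single_apply,
      smul_eq_mul]
    by_cases hxy : x = y
    · simp [hxy]
    · simp only [if_neg hxy, if_neg (fun h : y = x => hxy h.symm)]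
      simp [hxy]
  rw [this, Matrix.trace_diagonal]

lemma aux_galois {n : ℕ} (hn : 0 < n) {ι : Type} [Fintype ι] (d : ι → ℂ)
    (hd : ∀ i, d i ^ n = 1) (ε : ℚ) (hsum : ∑ i, d i = (ε : ℂ))
    (a : ℕ) (ha : a.Coprime n) : ∑ i, d i ^ a = (ε : ℂ) := by
  haveI : NeZero n := ⟨hn.ne'⟩
  set ζ : ℂ := Complex.exp (2 * Real.pi * Complex.I / n) with hζdef
  have hζ : IsPrimitiveRoot ζ n := Complex.isPrimitiveRoot_exp n hn.ne'
  choose e he using fun i => hζ.eq_pow_of_pow_eq_one (hd i)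
  have he2 : ∀ i, ζ ^ e i = d i := fun i => (he i).2
  set P : ℚ[X] := (∑ i, X ^ e i) - C ε with hP
  have hPζ : aeval ζ P = 0 := by
    rw [hP, map_sub, map_sum]
    simp only [map_pow, aeval_X, aeval_C, he2]
    rw [hsum]
    simp
  have hdvd : minpoly ℚ ζ ∣ P := minpoly.dvd ℚ ζ hPζ
  have hζa : IsPrimitiveRoot (ζ ^ a) n := hζ.pow_of_coprime a ha
  have hroot : aeval ((ζ : ℂ) ^ a) (minpoly ℚ ζ) = 0 := by
    rw [← Polynomial.cyclotomic_eq_minpoly_rat hζ hn, aeval_def, ← eval_map,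
      map_cyclotomic]
    exact hζa.isRoot_cyclotomic hn
  obtain ⟨Q, hQ⟩ := hdvd
  have hPa : aeval ((ζ : ℂ) ^ a) P = 0 := by
    rw [hQ, map_mul, hroot, zero_mul]
  rw [hP, map_sub, map_sum] at hPa
  simp only [map_pow, aeval_X, aeval_C] at hPa
  have : ∑ i, (ζ ^ a) ^ e i = (ε : ℂ) := by
    have := sub_eq_zero.mp hPa
    simpa using this
  calc ∑ i, d i ^ a = ∑ i, (ζ ^ a) ^ e i := by
        refine Finset.sum_congr rfl fun i _ => ?_
        rw [← he2 i, ← pow_mul, ← pow_mul, mul_comm]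
      _ = (ε : ℂ) := this

theorem stmt_5 (V : Type) [AddCommGroup V] [Module ℂ V] [FiniteDimensional ℂ V]
    (μ : ℕ) (hμ : 2 ≤ μ) (hdim : Module.finrank ℂ V = μ)
    (M : V ≃ₗ[ℂ] V) (hord : ∃ n : ℕ, 0 < n ∧ M ^ n = 1)
    (htr : LinearMap.trace ℂ V M.toLinearMap = LinearMap.trace ℂ V (M * M).toLinearMap)
    (htr1 : LinearMap.trace ℂ V M.toLinearMap = 1 ∨ LinearMap.trace ℂ V M.toLinearMap = -1) :
    ¬ ∃ k : ℤ, ((M ^ k : V ≃ₗ[ℂ] V) : V →ₗ[ℂ] V) = -LinearMap.id := by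
  classical
  rintro ⟨k, hk⟩
  have hVnt : Nontrivial V := by
    have : 0 < Module.finrank ℂ V := by omega
    exact Module.nontrivial_of_finrank_pos this
  obtain ⟨n₀, hn₀pos, hn₀⟩ := hord
  have hfin : IsOfFinOrder M := isOfFinOrder_iff_pow_eq_one.mpr ⟨n₀, hn₀pos, hn₀⟩
  set n := orderOf M with hn
  have hnpos : 0 < n := hfin.orderOf_pos
  have hMn : M ^ n = 1 := pow_orderOf_eq_one M
  -- coercion lemmas
  have hmulcoe : ∀ A B : V ≃ₗ[ℂ] V, ((A * B : V ≃ₗ[ℂ] V) : V →ₗ[ℂ] V)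
      = (A : V →ₗ[ℂ] V) ∘ₗ (B : V →ₗ[ℂ] V) := fun A B => rfl
  set f : Module.End ℂ V := M.toLinearMap with hf
  have hcoe : ∀ m : ℕ, ((M ^ m : V ≃ₗ[ℂ] V) : V →ₗ[ℂ] V) = f ^ m := by
    intro m
    induction m with
    | zero => rfl
    | succ i ih => rw [pow_succ, pow_succ, hmulcoe, ih]; rfl
  -- reduce k mod n
  set r : ℕ := (k % (n : ℤ)).toNat with hr
  have hrk : (r : ℤ) = k % (n : ℤ) := Int.toNat_of_nonneg
    (Int.emod_nonneg k (by exact_mod_cast hnpos.ne'))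
  have hMr : ((M ^ r : V ≃ₗ[ℂ] V) : V →ₗ[ℂ] V) = -LinearMap.id := by
    have : M ^ (r : ℤ) = M ^ k := by
      rw [hrk]
      conv_rhs => rw [← Int.emod_add_mul_ediv k (n : ℤ)]
      rw [zpow_add, zpow_mul, zpow_natCast, hMn, one_zpow, mul_one]
    rw [← hk, ← this, zpow_natCast]
  -- M ^ r ≠ 1
  have hid_ne : ¬ ((M ^ r : V ≃ₗ[ℂ] V) : V →ₗ[ℂ] V) = LinearMap.id := by
    rw [hMr]
    intro h
    obtain ⟨v, hv⟩ := exists_ne (0 : V)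
    have := LinearMap.congr_fun h v
    simp only [LinearMap.neg_apply, LinearMap.id_apply] at this
    have : (2 : ℂ) • v = 0 := by
      rw [two_smul]
      nth_rewrite 1 [← this]
      simp
    rcases smul_eq_zero.mp this with h2 | h0
    · norm_num at h2
    · exact hv h0
  have hndr : ¬ (n ∣ r) := by
    intro hdvd
    exact hid_ne (by rw [orderOf_dvd_iff_pow_eq_one.mp hdvd]; rfl)
  have hn2r : n ∣ 2 * r := by
    apply orderOf_dvd_of_pow_eq_one
    apply LinearEquiv.toLinearMap_injective
    rw [two_mul, pow_add, hmulcoe, hMr]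
    ext v
    simp
  -- choose a
  set j : ℕ := if Even r then 1 else 2 with hj
  set a : ℕ := r + j with ha
  have hodd : ¬ (2 ∣ a) := by
    rw [ha, hj]
    rcases Nat.even_or_odd r with he | ho
    · rw [if_pos he]
      rintro ⟨c, hc⟩
      obtain ⟨m, hm⟩ := he
      omega
    · rw [if_neg (Nat.not_even_iff_odd.mpr ho)]
      obtain ⟨m, hm⟩ := ho
      rintro ⟨c, hc⟩
      omega
  have hcop : Nat.Coprime a n := by
    rw [Nat.coprime_iff_gcd_eq_one]
    by_contra hg
    set p := (Nat.gcd a n).minFac with hp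
    have hpp : p.Prime := Nat.minFac_prime hg
    have hpa : p ∣ a := (Nat.minFac_dvd _).trans (Nat.gcd_dvd_left a n)
    have hpn : p ∣ n := (Nat.minFac_dvd _).trans (Nat.gcd_dvd_right a n)
    have hp2r : p ∣ 2 * r := hpn.trans hn2r
    rcases (Nat.Prime.dvd_mul hpp).mp hp2r with h2 | hpr
    · have : p = 2 := (Nat.prime_dvd_prime_iff_eq hpp Nat.prime_two).mp h2
      exact hodd (this ▸ hpa)
    · have hpj : p ∣ j := by
        have : p ∣ a - r := Nat.dvd_sub hpa hpr
        simpa [ha] using this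
      rw [hj] at hpj
      rcases Nat.even_or_odd r with he | ho
      · rw [if_pos he] at hpj
        exact hpp.one_lt.ne' (Nat.dvd_one.mp hpj)
      · rw [if_neg (Nat.not_even_iff_odd.mpr ho)] at hpj
        have : p = 2 := (Nat.prime_dvd_prime_iff_eq hpp Nat.prime_two).mp hpj
        rw [this] at hpr
        exact (Nat.not_even_iff_odd.mpr ho) (even_iff_two_dvd.mpr hpr)
  -- eigenbasis
  have hfn : f ^ n = 1 := by
    rw [← hcoe n, hMn]; rfl
  obtain ⟨ι, hfint, b, d, hbd⟩ := aux_eigenbasis f hnpos hfn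
  haveI := hfint
  have hd : ∀ i, d i ^ n = 1 := by
    intro i
    have h1 := aux_pow_apply b f d hbd n i
    rw [hfn] at h1
    have h2 : (d i ^ n - 1) • b i = 0 := by
      rw [sub_smul, one_smul, ← h1]
      simp [Module.End.one_apply]
    rcases smul_eq_zero.mp h2 with h3 | h3
    · exact sub_eq_zero.mp h3
    · exact absurd h3 (b.ne_zero i)
  -- ε
  obtain ⟨ε, hε, hεne⟩ : ∃ ε : ℚ, ((ε : ℂ) = LinearMap.trace ℂ V f) ∧ ε ≠ 0 := by
    rcases htr1 with h | h
    · exact ⟨1, by rw [h]; norm_num, one_ne_zero⟩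
    · exact ⟨-1, by rw [h]; norm_num, by norm_num⟩
  have hsum1 : ∑ i, d i = (ε : ℂ) := by
    have := aux_trace_pow b f d hbd 1
    rw [pow_one] at this
    simp only [pow_one] at this
    rw [← this, hε]
  have hsuma : ∑ i, d i ^ a = (ε : ℂ) := aux_galois hnpos d hd ε hsum1 a hcop
  have htra : LinearMap.trace ℂ V (f ^ a) = (ε : ℂ) := by
    rw [aux_trace_pow b f d hbd a, hsuma]
  -- other side
  have htrj : LinearMap.trace ℂ V (f ^ j) = (ε : ℂ) := by
    rw [hj]
    rcases Nat.even_or_odd r with he | ho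
    · rw [if_pos he, pow_one, ← hε]
    · rw [if_neg (Nat.not_even_iff_odd.mpr ho)]
      have : f ^ 2 = ((M * M : V ≃ₗ[ℂ] V) : V →ₗ[ℂ] V) := by
        rw [← hcoe 2, pow_two]
      rw [this, ← htr, hε]
  have htra2 : LinearMap.trace ℂ V (f ^ a) = -(ε : ℂ) := by
    have hfa : f ^ a = -(f ^ j) := by
      rw [← hcoe a, ha, pow_add, hmulcoe, hMr, hcoe j]
      ext v
      simp
    rw [hfa, map_neg, htrj]
  rw [htra] at htra2
  have : (ε : ℂ) = 0 := by linear_combination htra2 / 2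
  exact hεne (by exact_mod_cast this)
end

section
/- In the root lattice of type D_{2k} (k ≥ 2) with standard basis e_1, ..., e_μ (μ = 2k) satisfying I(e_i,e_i)=2, I(e_i,e_{i+1})=-1 for 1 ≤ i ≤ μ-2, I(e_{μ-2},e_μ)=-1, and I(e_i,e_j)=0 for all other i<j, the Coxeter element M_h = s_{e_1} ∘ ... ∘ s_{e_μ} (product of reflections) has (-1)-eigenlattice ker(M_h + id) ∩ L equal to ℤ·b_1 + ℤ·b_2, where b_1 = e_{μ-1} - e_μ and b_2 = e_{μ-1} + e_{μ-3} + ... + e_1, and the Gram matrix of I on (b_1, b_2) is [[4, 2], [2, 2k]]. -/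
/-- Gram matrix of the `D_{2k}` root lattice in the standard basis `e_1, ..., e_{2k}`
(0-based indices): `I(e_i,e_i)=2`, `I(e_i,e_{i+1})=-1` for `1 ≤ i ≤ μ-2`,
`I(e_{μ-2}, e_μ) = -1`, all other entries `0`. -/
def GmatD (k : ℕ) (i j : Fin (2 * k)) : ℤ :=
  if i = j then 2
  else if ((i : ℕ) + 1 = (j : ℕ) ∧ (j : ℕ) ≤ 2 * k - 2) ∨
          ((j : ℕ) + 1 = (i : ℕ) ∧ (i : ℕ) ≤ 2 * k - 2) then -1
  else if ((i : ℕ) = 2 * k - 3 ∧ (j : ℕ) = 2 * k - 1) ∨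
          ((j : ℕ) = 2 * k - 3 ∧ (i : ℕ) = 2 * k - 1) then -1
  else 0

/-- The symmetric bilinear form of the `D_{2k}` root lattice. -/
def IformD (k : ℕ) (x y : Fin (2 * k) → ℤ) : ℤ :=
  ∑ i, ∑ j, x i * GmatD k i j * y j

/-- The reflection `s_{e_i}(x) = x - I(x, e_i) • e_i` in the simple root `e_i`. -/
def reflD (k : ℕ) (i : Fin (2 * k)) (x : Fin (2 * k) → ℤ) : Fin (2 * k) → ℤ :=
  x - IformD k x (Pi.single i 1) • Pi.single i 1

/-- The Coxeter element `M_h = s_{e_1} ∘ s_{e_2} ∘ ... ∘ s_{e_μ}`. -/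
def MhD (k : ℕ) : (Fin (2 * k) → ℤ) → (Fin (2 * k) → ℤ) :=
  (List.finRange (2 * k)).foldr (fun i f => reflD k i ∘ f) id

/-- `b_1 = e_{μ-1} - e_μ` (1-based), i.e. indices `μ-2`, `μ-1` (0-based). -/
def b1D (k : ℕ) : Fin (2 * k) → ℤ :=
  fun j => if (j : ℕ) = 2 * k - 2 then 1 else if (j : ℕ) = 2 * k - 1 then -1 else 0

/-- `b_2 = e_{μ-1} + e_{μ-3} + ... + e_1` (1-based), i.e. the even 0-based indices. -/
def b2D (k : ℕ) : Fin (2 * k) → ℤ :=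
  fun j => if (j : ℕ) % 2 = 0 then 1 else 0

namespace D2k

def Xe {μ : ℕ} (x : Fin μ → ℤ) (n : ℕ) : ℤ := if h : n < μ then x ⟨n, h⟩ else 0

lemma Xe_coe {μ : ℕ} (x : Fin μ → ℤ) (j : Fin μ) : Xe x (j : ℕ) = x j := by
  simp [Xe]

lemma sum_collapse {μ : ℕ} (x : Fin μ → ℤ) (t : ℕ) (c : Prop) [Decidable c] :
    ∑ a : Fin μ, (if (a : ℕ) = t ∧ c then x a else 0) = if c then Xe x t else 0 := by
  by_cases hc : c
  · simp only [hc, and_true, if_true]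
    unfold Xe
    split
    · next h =>
      rw [Finset.sum_eq_single ⟨t, h⟩]
      · simp
      · intro b _ hb
        simp only [ite_eq_right_iff]
        intro hb'; exact absurd (Fin.ext hb') hb
      · intro h'; exact absurd (Finset.mem_univ _) h'
    · next h =>
      apply Finset.sum_eq_zero
      intro a _
      rw [if_neg]; omega
  · simp [hc]

lemma sum_collapse' {μ : ℕ} (x : Fin μ → ℤ) (t : ℕ) :
    ∑ a : Fin μ, (if (a : ℕ) = t then x a else 0) = Xe x t := by
  have := sum_collapse x t True
  simpa using this

lemma Iform_single (k : ℕ) (x : Fin (2*k) → ℤ) (i : Fin (2*k)) :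
    IformD k x (Pi.single i 1) = ∑ a, x a * GmatD k a i := by
  unfold IformD
  apply Finset.sum_congr rfl
  intro a _
  rw [Finset.sum_eq_single i]
  · simp
  · intro b _ hb; simp [Pi.single_apply, hb]
  · intro h; exact absurd (Finset.mem_univ _) h

lemma colsum (k : ℕ) (hk : 2 ≤ k) (x : Fin (2*k) → ℤ) (i : Fin (2*k)) :
    ∑ a, x a * GmatD k a i =
      2 * x i
      - (if 1 ≤ (i:ℕ) ∧ (i:ℕ) ≤ 2*k-2 then Xe x ((i:ℕ)-1) else 0)
      - (if (i:ℕ)+1 ≤ 2*k-2 then Xe x ((i:ℕ)+1) else 0)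
      - (if (i:ℕ) = 2*k-1 then Xe x (2*k-3) else 0)
      - (if (i:ℕ) = 2*k-3 then Xe x (2*k-1) else 0) := by
  have hi := i.isLt
  have key : ∀ a : Fin (2*k), x a * GmatD k a i =
      2 * (if (a:ℕ) = (i:ℕ) then x a else 0)
      - (if (a:ℕ) = (i:ℕ)-1 ∧ (1 ≤ (i:ℕ) ∧ (i:ℕ) ≤ 2*k-2) then x a else 0)
      - (if (a:ℕ) = (i:ℕ)+1 ∧ ((i:ℕ)+1 ≤ 2*k-2) then x a else 0)
      - (if (a:ℕ) = 2*k-3 ∧ ((i:ℕ) = 2*k-1) then x a else 0)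
      - (if (a:ℕ) = 2*k-1 ∧ ((i:ℕ) = 2*k-3) then x a else 0) := by
    intro a
    have ha := a.isLt
    simp only [GmatD, Fin.ext_iff]
    split_ifs <;> first | (exfalso; omega) | ring
  rw [Finset.sum_congr rfl (fun a _ => key a)]
  simp only [Finset.sum_sub_distrib, ← Finset.mul_sum, sum_collapse, sum_collapse', if_true, Xe_coe]

lemma refl_apply (k : ℕ) (m : Fin (2*k)) (x : Fin (2*k) → ℤ) (j : Fin (2*k)) :
    reflD k m x j = x j - (if j = m then ∑ a, x a * GmatD k a m else 0) := by
  simp [reflD, Iform_single, Pi.single_apply, mul_ite]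

/-- the coordinates of the partial product `s_{e_{m+1}} ∘ ... ∘ s_{e_μ}` applied to `x` -/
def Efun (μ : ℕ) (x : Fin μ → ℤ) (m j : ℕ) : ℤ :=
  if j < m then Xe x j
  else if j = μ-1 ∨ j = μ-2 then Xe x (μ-3) - Xe x j
  else (if j = 0 then 0 else Xe x (j-1)) + Xe x (μ-3) - Xe x (μ-2) - Xe x (μ-1)

lemma Efun_lt {μ : ℕ} (x : Fin μ → ℤ) {m j : ℕ} (h : j < m) : Efun μ x m j = Xe x j := by
  unfold Efun; rw [if_pos h]

lemma Efun_hi {μ : ℕ} (x : Fin μ → ℤ) {m j : ℕ} (h1 : ¬ j < m) (h2 : j = μ-1 ∨ j = μ-2) :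
    Efun μ x m j = Xe x (μ-3) - Xe x j := by
  unfold Efun; rw [if_neg h1, if_pos h2]

lemma Efun_mid {μ : ℕ} (x : Fin μ → ℤ) {m j : ℕ} (h1 : ¬ j < m)
    (h2 : ¬(j = μ-1 ∨ j = μ-2)) (h3 : ¬ j = 0) :
    Efun μ x m j = Xe x (j-1) + Xe x (μ-3) - Xe x (μ-2) - Xe x (μ-1) := by
  unfold Efun; rw [if_neg h1, if_neg h2, if_neg h3]

lemma Efun_z {μ : ℕ} (x : Fin μ → ℤ) {m : ℕ} (h1 : ¬ (0:ℕ) < m)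
    (h2 : ¬((0:ℕ) = μ-1 ∨ (0:ℕ) = μ-2)) :
    Efun μ x m 0 = 0 + Xe x (μ-3) - Xe x (μ-2) - Xe x (μ-1) := by
  unfold Efun; rw [if_neg h1, if_neg h2, if_pos rfl]

set_option maxHeartbeats 2000000 in
lemma fold_eq (k : ℕ) (hk : 2 ≤ k) : ∀ d, d ≤ 2*k → ∀ (x : Fin (2*k) → ℤ) (j : Fin (2*k)),
    ((List.finRange (2*k)).drop (2*k - d)).foldr (fun i f => reflD k i ∘ f) id x j
      = Efun (2*k) x (2*k - d) j := by
  intro d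
  induction d with
  | zero =>
    intro _ x j
    rw [Nat.sub_zero, List.drop_of_length_le (by simp)]
    have hj := j.isLt
    simp only [List.foldr_nil, id_eq, Efun, if_pos hj, Xe_coe]
  | succ d ih =>
    intro hd x j
    set m : ℕ := 2*k - (d+1) with hm_def
    have hm : m < 2*k := by omega
    have hm1 : 2*k - d = m + 1 := by omega
    have hlen : m < (List.finRange (2*k)).length := by simpa using hm
    rw [List.drop_eq_getElem_cons hlen]
    have hget : (List.finRange (2*k))[m] = (⟨m, hm⟩ : Fin (2*k)) := by
      simp [List.getElem_finRange]
    rw [hget, List.foldr_cons]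
    set y : Fin (2*k) → ℤ :=
      ((List.finRange (2*k)).drop (m+1)).foldr (fun i f => reflD k i ∘ f) id x with hy
    have hyval : ∀ t : Fin (2*k), y t = Efun (2*k) x (m+1) t := by
      intro t
      have := ih (by omega) x t
      rwa [hm1] at this
    have hXy : ∀ t : ℕ, Xe y t = if h : t < 2*k then Efun (2*k) x (m+1) t else 0 := by
      intro t
      unfold Xe
      split
      · next h => rw [hyval]
      · rfl
    show reflD k ⟨m, hm⟩ y j = _
    rw [refl_apply, colsum k hk]
    by_cases hj : (j:ℕ) = m
    · have hjm : j = ⟨m, hm⟩ := Fin.ext hj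
      rw [if_pos hjm]
      rw [hyval j, hyval ⟨m, hm⟩]
      simp only [hXy, hj]
      have hj4 : 4 ≤ 2*k := by omega
      clear_value y
      clear hy hyval hXy hget hlen y hjm
      clear_value m
      -- now a pure arithmetic identity about Efun
      rcases (by omega : m = 2*k-1 ∨ m = 2*k-2 ∨ m = 2*k-3 ∨ (1 ≤ m ∧ m ≤ 2*k-4) ∨ m = 0)
        with hA | hB | hC | hD | hE0
      · subst hA
        have e1 : Efun (2*k) x (2*k-1+1) (2*k-1) = Xe x (2*k-1) := Efun_lt x (by omega)
        have e2 : Efun (2*k) x (2*k-1+1) (2*k-3) = Xe x (2*k-3) := Efun_lt x (by omega)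
        have e3 : Efun (2*k) x (2*k-1) (2*k-1) = Xe x (2*k-3) - Xe x (2*k-1) :=
          Efun_hi x (by omega) (by omega)
        simp only [e1, e2, e3]
        split_ifs <;> first | (exfalso; omega) | ring
      · subst hB
        have e1 : Efun (2*k) x (2*k-2+1) (2*k-2) = Xe x (2*k-2) := Efun_lt x (by omega)
        have e2 : Efun (2*k) x (2*k-2+1) (2*k-2-1) = Xe x (2*k-2-1) := Efun_lt x (by omega)
        have e3 : Efun (2*k) x (2*k-2) (2*k-2) = Xe x (2*k-3) - Xe x (2*k-2) :=
          Efun_hi x (by omega) (by omega)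
        have e2' : Efun (2*k) x (2*k-2+1) (2*k-3) = Xe x (2*k-3) := Efun_lt x (by omega)
        simp only [show (2*k-2-1 : ℕ) = 2*k-3 from by omega, e1, e2', e3]
        split_ifs <;> first | (exfalso; omega) | ring
      · subst hC
        have e1 : Efun (2*k) x (2*k-3+1) (2*k-3) = Xe x (2*k-3) := Efun_lt x (by omega)
        have e2 : Efun (2*k) x (2*k-3+1) (2*k-3-1) = Xe x (2*k-3-1) := Efun_lt x (by omega)
        have e3 : Efun (2*k) x (2*k-3+1) (2*k-3+1) =
            Xe x (2*k-3) - Xe x (2*k-3+1) := Efun_hi x (by omega) (by omega)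
        have e4 : Efun (2*k) x (2*k-3+1) (2*k-1) =
            Xe x (2*k-3) - Xe x (2*k-1) := Efun_hi x (by omega) (by omega)
        have e5 : Efun (2*k) x (2*k-3) (2*k-3) =
            Xe x (2*k-3-1) + Xe x (2*k-3) - Xe x (2*k-2) - Xe x (2*k-1) :=
          Efun_mid x (by omega) (by omega) (by omega)
        have e6 : (2*k-3+1 : ℕ) = 2*k-2 := by omega
        simp only [e1, e2, e3, e4, e5]
        rw [e6]
        split_ifs <;> first | (exfalso; omega) | ring
      · obtain ⟨hD1, hD2⟩ := hD
        have e1 : Efun (2*k) x (m+1) m = Xe x m := Efun_lt x (by omega)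
        have e2 : Efun (2*k) x (m+1) (m-1) = Xe x (m-1) := Efun_lt x (by omega)
        have e3 : Efun (2*k) x (m+1) (m+1) =
            Xe x m + Xe x (2*k-3) - Xe x (2*k-2) - Xe x (2*k-1) :=
          Efun_mid x (m := m+1) (j := m+1) (by omega) (by omega) (by omega)
        have e5 : Efun (2*k) x m m =
            Xe x (m-1) + Xe x (2*k-3) - Xe x (2*k-2) - Xe x (2*k-1) :=
          Efun_mid x (by omega) (by omega) (by omega)
        simp only [e1, e2, e3, e5]
        split_ifs <;> first | (exfalso; omega) | ring
      · subst hE0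
        have e1 : Efun (2*k) x (0+1) 0 = Xe x 0 := Efun_lt x (by omega)
        have e3 : Efun (2*k) x (0+1) (0+1) =
            Xe x 0 + Xe x (2*k-3) - Xe x (2*k-2) - Xe x (2*k-1) :=
          Efun_mid x (m := 0+1) (j := 0+1) (by omega) (by omega) (by omega)
        have e5 : Efun (2*k) x 0 0 =
            0 + Xe x (2*k-3) - Xe x (2*k-2) - Xe x (2*k-1) :=
          Efun_z x (by omega) (by omega)
        simp only [e1, e3, e5]
        split_ifs <;> first | (exfalso; omega) | ring
    · have hjm : ¬ (j = ⟨m, hm⟩) := fun h => hj (by rw [h])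
      rw [if_neg hjm, sub_zero, hyval j]
      have hjlt := j.isLt
      unfold Efun
      split_ifs <;> first | rfl | (exfalso; omega) | ring



lemma MhD_apply (k : ℕ) (hk : 2 ≤ k) (x : Fin (2*k) → ℤ) (j : Fin (2*k)) :
    MhD k x j = Efun (2*k) x 0 (j : ℕ) := by
  have := fold_eq k hk (2*k) le_rfl x j
  rwa [Nat.sub_self, List.drop_zero] at this

lemma Xe_b1 (k : ℕ) (hk : 2 ≤ k) (t : ℕ) :
    Xe (b1D k) t = if t = 2*k-2 then 1 else if t = 2*k-1 then -1 else 0 := by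
  unfold Xe b1D
  simp only [Fin.val_mk]
  split_ifs <;> omega

lemma Xe_b2 (k : ℕ) (t : ℕ) :
    Xe (b2D k) t = if t < 2*k ∧ t % 2 = 0 then 1 else 0 := by
  unfold Xe b2D
  simp only [Fin.val_mk]
  split_ifs <;> omega

lemma Xe_comb (k : ℕ) (c d : ℤ) (t : ℕ) :
    Xe (c • b1D k + d • b2D k) t = c * Xe (b1D k) t + d * Xe (b2D k) t := by
  unfold Xe
  split
  · simp [mul_comm]
  · ring

lemma Gmat_symm (k : ℕ) (i j : Fin (2*k)) : GmatD k i j = GmatD k j i := by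
  rcases eq_or_ne i j with rfl | hne
  · rfl
  · simp only [GmatD, if_neg hne, if_neg (Ne.symm hne)]
    split_ifs <;> first | rfl | (exfalso; omega)

lemma Iform_eq (k : ℕ) (x y : Fin (2*k) → ℤ) :
    IformD k x y = ∑ i, x i * (∑ j, y j * GmatD k j i) := by
  unfold IformD
  apply Finset.sum_congr rfl
  intro i _
  rw [Finset.mul_sum]
  apply Finset.sum_congr rfl
  intro j _
  rw [Gmat_symm k j i]
  ring

lemma sum_b1_mul (k : ℕ) (hk : 2 ≤ k) (g : Fin (2*k) → ℤ) :
    ∑ i, b1D k i * g i = Xe g (2*k-2) - Xe g (2*k-1) := by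
  have key : ∀ i : Fin (2*k), b1D k i * g i =
      (if (i:ℕ) = 2*k-2 then g i else 0) - (if (i:ℕ) = 2*k-1 then g i else 0) := by
    intro i
    have := i.isLt
    unfold b1D
    split_ifs <;> first | (exfalso; omega) | ring
  rw [Finset.sum_congr rfl (fun i _ => key i), Finset.sum_sub_distrib,
    sum_collapse', sum_collapse']

set_option maxHeartbeats 2000000 in
lemma colsum_mu2 (k : ℕ) (hk : 2 ≤ k) (h1 : 2*k-2 < 2*k) (y : Fin (2*k) → ℤ) :
    ∑ a, y a * GmatD k a ⟨2*k-2, h1⟩ = 2 * y ⟨2*k-2, h1⟩ - Xe y (2*k-3) := by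
  rw [colsum k hk]
  simp only [Fin.val_mk]
  rw [if_pos (show 1 ≤ 2*k-2 ∧ 2*k-2 ≤ 2*k-2 by omega),
    if_neg (show ¬ 2*k-2+1 ≤ 2*k-2 by omega),
    if_neg (show ¬ 2*k-2 = 2*k-1 by omega),
    if_neg (show ¬ 2*k-2 = 2*k-3 by omega),
    show (2*k-2-1 : ℕ) = 2*k-3 by omega]
  ring

lemma colsum_mu1 (k : ℕ) (hk : 2 ≤ k) (h2 : 2*k-1 < 2*k) (y : Fin (2*k) → ℤ) :
    ∑ a, y a * GmatD k a ⟨2*k-1, h2⟩ = 2 * y ⟨2*k-1, h2⟩ - Xe y (2*k-3) := by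
  rw [colsum k hk]
  simp only [Fin.val_mk]
  rw [if_neg (show ¬ (1 ≤ 2*k-1 ∧ 2*k-1 ≤ 2*k-2) by omega),
    if_neg (show ¬ 2*k-1+1 ≤ 2*k-2 by omega),
    if_neg (show ¬ 2*k-1 = 2*k-3 by omega)]
  rw [if_true]
  ring

lemma gram11 (k : ℕ) (hk : 2 ≤ k) : IformD k (b1D k) (b1D k) = 4 := by
  rw [Iform_eq, sum_b1_mul k hk]
  have h1 : (2*k-2 : ℕ) < 2*k := by omega
  have h2 : (2*k-1 : ℕ) < 2*k := by omega
  unfold Xe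
  rw [dif_pos h1, dif_pos h2]
  beta_reduce
  rw [colsum_mu2 k hk h1, colsum_mu1 k hk h2]
  have e1 : b1D k ⟨2*k-2, h1⟩ = 1 := by
    unfold b1D; rw [Fin.val_mk, if_pos rfl]
  have e2 : b1D k ⟨2*k-1, h2⟩ = -1 := by
    unfold b1D
    rw [Fin.val_mk, if_neg (show ¬ 2*k-1 = 2*k-2 by omega), if_pos rfl]
  have e3 : Xe (b1D k) (2*k-3) = 0 := by
    rw [Xe_b1 k hk, if_neg (show ¬ 2*k-3 = 2*k-2 by omega),
      if_neg (show ¬ 2*k-3 = 2*k-1 by omega)]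
  rw [e1, e2, e3]
  ring

lemma gram12 (k : ℕ) (hk : 2 ≤ k) : IformD k (b1D k) (b2D k) = 2 := by
  rw [Iform_eq, sum_b1_mul k hk]
  have h1 : (2*k-2 : ℕ) < 2*k := by omega
  have h2 : (2*k-1 : ℕ) < 2*k := by omega
  unfold Xe
  rw [dif_pos h1, dif_pos h2]
  beta_reduce
  rw [colsum_mu2 k hk h1, colsum_mu1 k hk h2]
  have e1 : b2D k ⟨2*k-2, h1⟩ = 1 := by
    unfold b2D; rw [Fin.val_mk, if_pos (show (2*k-2) % 2 = 0 by omega)]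
  have e2 : b2D k ⟨2*k-1, h2⟩ = 0 := by
    unfold b2D; rw [Fin.val_mk, if_neg (show ¬ (2*k-1) % 2 = 0 by omega)]
  have e3 : Xe (b2D k) (2*k-3) = 0 := by
    rw [Xe_b2 k, if_neg (by omega)]
  rw [e1, e2, e3]
  ring

lemma sum_range_even (n : ℕ) :
    ∑ i ∈ Finset.range (2*n), (if i % 2 = 0 then (2:ℤ) else 0) = 2*n := by
  induction n with
  | zero => simp
  | succ n ih =>
    rw [show 2*(n+1) = (2*n+1)+1 by ring, Finset.sum_range_succ, Finset.sum_range_succ, ih]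
    have h1 : (2*n) % 2 = 0 := by omega
    have h2 : (2*n+1) % 2 ≠ 0 := by omega
    rw [if_pos h1, if_neg h2]
    push_cast
    ring

set_option maxHeartbeats 2000000 in
lemma gram22 (k : ℕ) (hk : 2 ≤ k) : IformD k (b2D k) (b2D k) = 2*k := by
  rw [Iform_eq]
  have key : ∀ i : Fin (2*k), b2D k i * (∑ j, b2D k j * GmatD k j i) =
      (if (i:ℕ) % 2 = 0 then (2:ℤ) else 0) := by
    intro i
    have hi := i.isLt
    by_cases hp : (i:ℕ) % 2 = 0
    · rw [if_pos hp, colsum k hk]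
      have t1 : (if 1 ≤ (i:ℕ) ∧ (i:ℕ) ≤ 2*k-2 then Xe (b2D k) ((i:ℕ)-1) else 0) = 0 := by
        rw [Xe_b2 k]; split_ifs <;> omega
      have t2 : (if (i:ℕ)+1 ≤ 2*k-2 then Xe (b2D k) ((i:ℕ)+1) else 0) = 0 := by
        rw [Xe_b2 k]; split_ifs <;> omega
      have t3 : (if (i:ℕ) = 2*k-1 then Xe (b2D k) (2*k-3) else 0) = 0 := by
        rw [Xe_b2 k]; split_ifs <;> omega
      have t4 : (if (i:ℕ) = 2*k-3 then Xe (b2D k) (2*k-1) else 0) = 0 := by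
        rw [Xe_b2 k]; split_ifs <;> omega
      rw [t1, t2, t3, t4]
      have e1 : b2D k i = 1 := by unfold b2D; rw [if_pos hp]
      rw [e1]
      ring
    · rw [if_neg hp]
      have e1 : b2D k i = 0 := by unfold b2D; rw [if_neg hp]
      rw [e1, zero_mul]
  rw [Finset.sum_congr rfl (fun i _ => key i)]
  rw [Fin.sum_univ_eq_sum_range (fun i => if i % 2 = 0 then (2:ℤ) else 0) (2*k)]
  rw [sum_range_even k]

end D2k

namespace D2k

set_option maxHeartbeats 1000000 in
lemma eigen_iff (k : ℕ) (hk : 2 ≤ k) (x : Fin (2*k) → ℤ) :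
    MhD k x = -x ↔ ∃ c d : ℤ, x = c • b1D k + d • b2D k := by
  have h4 : 4 ≤ 2*k := by omega
  constructor
  · intro hM
    have h : ∀ j : Fin (2*k), Efun (2*k) x 0 (j:ℕ) = -(Xe x (j:ℕ)) := by
      intro j
      rw [← MhD_apply k hk, hM, Xe_coe]
      rfl
    -- first: x_{2k-3} = 0
    have hmu3 : Xe x (2*k-3) = 0 := by
      have h1 := h ⟨2*k-1, by omega⟩
      rw [Fin.val_mk, Efun_hi x (by omega) (by omega)] at h1
      linarith
    -- the alternating values
    have key : ∀ t, t ≤ 2*k-3 →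
        Xe x t = (if t % 2 = 0 then Xe x (2*k-2) + Xe x (2*k-1) else 0) := by
      intro t
      induction t using Nat.strong_induction_on with
      | _ t ih =>
        intro ht
        rcases Nat.eq_zero_or_pos t with rfl | hpos
        · have h0 := h ⟨0, by omega⟩
          rw [Fin.val_mk, Efun_z x (by omega) (by omega)] at h0
          rw [if_pos (by norm_num)]
          linarith
        · have ht' := h ⟨t, by omega⟩
          rw [Fin.val_mk, Efun_mid x (by omega) (by omega) (by omega)] at ht'
          have iht := ih (t-1) (by omega) (by omega)
          by_cases hp : t % 2 = 0
          · rw [if_pos hp]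
            rw [if_neg (by omega)] at iht
            linarith
          · rw [if_neg hp]
            rw [if_pos (by omega)] at iht
            linarith
    refine ⟨-(Xe x (2*k-1)), Xe x (2*k-2) + Xe x (2*k-1), ?_⟩
    funext j
    have hj := j.isLt
    rw [← Xe_coe x j]
    rw [Pi.add_apply, Pi.smul_apply, Pi.smul_apply]
    simp only [smul_eq_mul]
    unfold b1D b2D
    rcases (by omega : (j:ℕ) = 2*k-1 ∨ (j:ℕ) = 2*k-2 ∨ (j:ℕ) ≤ 2*k-3) with hc | hc | hc
    · rw [hc, if_neg (by omega), if_pos rfl, if_neg (by omega)]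
      ring
    · rw [hc, if_pos rfl, if_pos (by omega)]
      ring
    · rw [key (j:ℕ) hc, if_neg (show ¬(j:ℕ) = 2*k-2 by omega),
        if_neg (show ¬(j:ℕ) = 2*k-1 by omega)]
      split_ifs with hp
      · ring
      · ring
  · rintro ⟨c, d, rfl⟩
    set x' : Fin (2*k) → ℤ := c • b1D k + d • b2D k with hx'
    have hV1 : Xe x' (2*k-1) = -c := by
      rw [Xe_comb, Xe_b1 k hk, Xe_b2 k]
      rw [if_neg (by omega), if_pos rfl, if_neg (by omega)]
      ring
    have hV2 : Xe x' (2*k-2) = c + d := by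
      rw [Xe_comb, Xe_b1 k hk, Xe_b2 k]
      rw [if_pos rfl, if_pos (by omega)]
      ring
    have hV3 : Xe x' (2*k-3) = 0 := by
      rw [Xe_comb, Xe_b1 k hk, Xe_b2 k]
      rw [if_neg (by omega), if_neg (by omega), if_neg (by omega)]
      ring
    have hV : ∀ t, t ≤ 2*k-3 → Xe x' t = (if t % 2 = 0 then d else 0) := by
      intro t ht
      rw [Xe_comb, Xe_b1 k hk, Xe_b2 k]
      rw [if_neg (by omega), if_neg (by omega)]
      split_ifs with h1 h2 h2
      · ring
      · exfalso; omega
      · exfalso; omega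
      · ring
    funext j
    have hj := j.isLt
    rw [MhD_apply k hk, Pi.neg_apply, ← Xe_coe x' j]
    rcases (by omega : (j:ℕ) = 2*k-1 ∨ (j:ℕ) = 2*k-2 ∨ (j:ℕ) = 0 ∨
        (1 ≤ (j:ℕ) ∧ (j:ℕ) ≤ 2*k-3)) with hc | hc | hc | hc
    · rw [hc, Efun_hi x' (by omega) (by omega), hV1, hV3]
      ring
    · rw [hc, Efun_hi x' (by omega) (by omega), hV2, hV3]
      ring
    · rw [hc, Efun_z x' (by omega) (by omega), hV1, hV2, hV3,
        hV 0 (by omega)]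
      rw [if_pos (by norm_num)]
      ring
    · rw [Efun_mid x' (by omega) (by omega) (by omega), hV1, hV2, hV3,
        hV ((j:ℕ)-1) (by omega), hV (j:ℕ) (by omega)]
      by_cases hp : (j:ℕ) % 2 = 0
      · rw [if_pos hp, if_neg (by omega)]
        ring
      · rw [if_neg hp, if_pos (by omega)]
        ring

end D2k


theorem stmt_11 (k : ℕ) (hk : 2 ≤ k) :
    (∀ x : Fin (2 * k) → ℤ, MhD k x = -x ↔ ∃ c d : ℤ, x = c • b1D k + d • b2D k) ∧
    IformD k (b1D k) (b1D k) = 4 ∧ IformD k (b1D k) (b2D k) = 2 ∧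
    IformD k (b2D k) (b2D k) = 2 * k := by
  exact ⟨fun x => D2k.eigen_iff k hk x, D2k.gram11 k hk, D2k.gram12 k hk, D2k.gram22 k hk⟩
end

section
/- Let B be a rank-2 ℤ-lattice with symmetric bilinear form I having Gram matrix [[4, 2], [2, 2k]] in a basis (b_1, b_2). If k = 2 then |Aut(B, I)| = 12, and if k ≥ 3 then |Aut(B, I)| = 4; moreover if k ≥ 3 then the only β ∈ B with I(β,β) = 4 are β = ±b_1. -/
/-- The bilinear form with Gram matrix `[[4, 2], [2, 2k]]` in the basis `(b₁, b₂)`. -/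
def Q12 (k : ℕ) (x y : Fin 2 → ℤ) : ℤ :=
  4 * x 0 * y 0 + 2 * x 0 * y 1 + 2 * x 1 * y 0 + 2 * k * x 1 * y 1

def mkMap (a b c d : ℤ) : (Fin 2 → ℤ) →ₗ[ℤ] (Fin 2 → ℤ) where
  toFun x := ![a * x 0 + c * x 1, b * x 0 + d * x 1]
  map_add' x y := by funext i; fin_cases i <;> simp <;> ring
  map_smul' m x := by funext i; fin_cases i <;> simp <;> ring

def mkEquiv (a b c d : ℤ) (hε : (a*d-b*c)*(a*d-b*c) = 1) :
    (Fin 2 → ℤ) ≃ₗ[ℤ] (Fin 2 → ℤ) :=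
  LinearEquiv.ofLinear (mkMap a b c d)
    (mkMap ((a*d-b*c)*d) (-((a*d-b*c)*b)) (-((a*d-b*c)*c)) ((a*d-b*c)*a))
    (by refine LinearMap.ext fun x => funext fun i => ?_
        fin_cases i
        · simp [mkMap]; linear_combination (x 0) * hε
        · simp [mkMap]; linear_combination (x 1) * hε)
    (by refine LinearMap.ext fun x => funext fun i => ?_
        fin_cases i
        · simp [mkMap]; linear_combination (x 0) * hε
        · simp [mkMap]; linear_combination (x 1) * hε)

lemma lin_eval (φ : (Fin 2 → ℤ) →ₗ[ℤ] (Fin 2 → ℤ)) (x : Fin 2 → ℤ) (i : Fin 2) :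
    φ x i = x 0 * φ ![1,0] i + x 1 * φ ![0,1] i := by
  have : φ x = x 0 • φ ![1,0] + x 1 • φ ![0,1] := by
    rw [← map_smul, ← map_smul, ← map_add]
    congr 1
    funext j; fin_cases j <;> simp
  rw [this]; simp

def EE (k : ℕ) (p : ℤ × ℤ × ℤ × ℤ) : Prop :=
  4*p.1*p.1 + 4*p.1*p.2.1 + 2*(k:ℤ)*p.2.1*p.2.1 = 4 ∧
  4*p.1*p.2.2.1 + 2*p.1*p.2.2.2 + 2*p.2.1*p.2.2.1 + 2*(k:ℤ)*p.2.1*p.2.2.2 = 2 ∧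
  4*p.2.2.1*p.2.2.1 + 4*p.2.2.1*p.2.2.2 + 2*(k:ℤ)*p.2.2.2*p.2.2.2 = 2*(k:ℤ)

lemma eps_sq (k : ℕ) (hk : 2 ≤ k) (a b c d : ℤ)
    (h1 : 4*a*a + 4*a*b + 2*(k:ℤ)*b*b = 4)
    (h2 : 4*a*c + 2*a*d + 2*b*c + 2*(k:ℤ)*b*d = 2)
    (h3 : 4*c*c + 4*c*d + 2*(k:ℤ)*d*d = 2*(k:ℤ)) :
    (a*d-b*c)*(a*d-b*c) = 1 := by
  have hK : (2:ℤ) ≤ (k:ℤ) := by exact_mod_cast hk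
  have h0 : (8*(k:ℤ)-4) * ((a*d-b*c)*(a*d-b*c) - 1) = 0 := by
    linear_combination (4*c*c+4*c*d+2*(k:ℤ)*d*d)*h1 + 4*h3 -
      (4*a*c+2*a*d+2*b*c+2*(k:ℤ)*b*d + 2)*h2
  have h8 : (8*(k:ℤ)-4) ≠ 0 := by omega
  have := (mul_eq_zero.mp h0).resolve_left h8
  linarith

lemma mkEquiv_apply (a b c d : ℤ) (h) (x : Fin 2 → ℤ) :
    mkEquiv a b c d h x = ![a * x 0 + c * x 1, b * x 0 + d * x 1] := rfl

lemma lin_eval' (φ : (Fin 2 → ℤ) ≃ₗ[ℤ] (Fin 2 → ℤ)) (x : Fin 2 → ℤ) (i : Fin 2) :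
    φ x i = x 0 * φ ![1,0] i + x 1 * φ ![0,1] i := by
  simpa using lin_eval (φ : (Fin 2 → ℤ) →ₗ[ℤ] (Fin 2 → ℤ)) x i

def autEquiv (k : ℕ) (hk : 2 ≤ k) :
    {φ : (Fin 2 → ℤ) ≃ₗ[ℤ] (Fin 2 → ℤ) // ∀ x y, Q12 k (φ x) (φ y) = Q12 k x y} ≃
    {p : ℤ × ℤ × ℤ × ℤ // EE k p} where
  toFun φ := ⟨(φ.1 ![1,0] 0, φ.1 ![1,0] 1, φ.1 ![0,1] 0, φ.1 ![0,1] 1), by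
    have h11 := φ.2 ![1,0] ![1,0]
    have h12 := φ.2 ![1,0] ![0,1]
    have h22 := φ.2 ![0,1] ![0,1]
    simp [Q12] at h11 h12 h22
    refine ⟨by linear_combination h11, by linear_combination h12, by linear_combination h22⟩⟩
  invFun p := ⟨mkEquiv p.1.1 p.1.2.1 p.1.2.2.1 p.1.2.2.2
      (eps_sq k hk _ _ _ _ p.2.1 p.2.2.1 p.2.2.2), by
    intro x y
    obtain ⟨⟨a, b, c, d⟩, h1, h2, h3⟩ := p
    simp only [mkEquiv_apply, Q12, Matrix.cons_val_zero, Matrix.cons_val_one, Matrix.head_cons]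
    simp only [EE] at h1 h2 h3
    linear_combination (x 0 * y 0) * h1 + (x 0 * y 1 + x 1 * y 0) * h2 + (x 1 * y 1) * h3⟩
  left_inv φ := by
    apply Subtype.ext
    apply LinearEquiv.ext
    intro x
    funext i
    rw [mkEquiv_apply]
    fin_cases i <;> simp <;> rw [lin_eval' φ.1 x] <;> ring
  right_inv p := by
    apply Subtype.ext
    simp only [mkEquiv_apply]
    obtain ⟨⟨a, b, c, d⟩, h⟩ := p
    simp

lemma classify3 (k : ℕ) (hk : 3 ≤ k) (p : ℤ × ℤ × ℤ × ℤ) :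
    EE k p ↔ p = (1,0,0,1) ∨ p = (1,0,1,-1) ∨ p = (-1,0,-1,1) ∨ p = (-1,0,0,-1) := by
  have hK : (3:ℤ) ≤ (k:ℤ) := by exact_mod_cast hk
  constructor
  · obtain ⟨a,b,c,d⟩ := p
    rintro ⟨h1,h2,h3⟩
    simp only at h1 h2 h3
    have hb : b = 0 := by
      by_contra hb
      have hb2 : 1 ≤ b*b := by rcases lt_or_gt_of_ne hb with h|h <;> nlinarith
      nlinarith [sq_nonneg (2*a+b)]
    subst hb
    have ha2 : 2*(a*(2*c+d)) = 2*1 := by linear_combination h2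
    have ha : a*(2*c+d) = 1 := mul_left_cancel₀ (by norm_num : (2:ℤ) ≠ 0) ha2
    simp only [Prod.mk.injEq]
    rcases Int.eq_one_or_neg_one_of_mul_eq_one' ha with ⟨ha1, hs⟩|⟨ha1, hs⟩ <;> subst ha1
    · have hd0 : (2*(k:ℤ)-1)*(d*d-1) = 0 := by linear_combination h3 - (2*c+d+1)*hs
      have hdd : d*d = 1 := by
        have := (mul_eq_zero.mp hd0).resolve_left (by omega)
        linarith
      rcases mul_self_eq_one_iff.mp hdd with rfl|rfl <;> simp <;> omega
    · have hd0 : (2*(k:ℤ)-1)*(d*d-1) = 0 := by linear_combination h3 - (2*c+d-1)*hs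
      have hdd : d*d = 1 := by
        have := (mul_eq_zero.mp hd0).resolve_left (by omega)
        linarith
      rcases mul_self_eq_one_iff.mp hdd with rfl|rfl <;> simp <;> omega
  · rintro (rfl|rfl|rfl|rfl) <;> refine ⟨?_, ?_, ?_⟩ <;> norm_num [EE]

lemma vec2 (x y : ℤ) (h : 4*x*x + 4*x*y + 4*y*y = 4) :
    (x = 1 ∧ y = 0) ∨ (x = 0 ∧ y = 1) ∨ (x = 1 ∧ y = -1) ∨
    (x = -1 ∧ y = 0) ∨ (x = 0 ∧ y = -1) ∨ (x = -1 ∧ y = 1) := by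
  have hy1 : -1 ≤ y := by nlinarith [sq_nonneg (2*x+y)]
  have hy2 : y ≤ 1 := by nlinarith [sq_nonneg (2*x+y)]
  have hx1 : -1 ≤ x := by nlinarith [sq_nonneg (x+2*y)]
  have hx2 : x ≤ 1 := by nlinarith [sq_nonneg (x+2*y)]
  interval_cases x <;> interval_cases y <;> omega

lemma classify2 (p : ℤ × ℤ × ℤ × ℤ) :
    EE 2 p ↔ p = (1,0,0,1) ∨ p = (1,0,1,-1) ∨ p = (0,1,1,0) ∨ p = (0,1,-1,1) ∨
      p = (1,-1,1,0) ∨ p = (1,-1,0,-1) ∨ p = (-1,0,0,-1) ∨ p = (-1,0,-1,1) ∨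
      p = (0,-1,-1,0) ∨ p = (0,-1,1,-1) ∨ p = (-1,1,-1,0) ∨ p = (-1,1,0,1) := by
  constructor
  · obtain ⟨a,b,c,d⟩ := p
    rintro ⟨h1,h2,h3⟩
    have h1' : 4*a*a + 4*a*b + 4*b*b = 4 := by push_cast at h1; linarith
    have h3' : 4*c*c + 4*c*d + 4*d*d = 4 := by push_cast at h3; linarith
    have h2' : 4*a*c + 2*a*d + 2*b*c + 4*b*d = 2 := by push_cast at h2; linarith
    clear h1 h2 h3
    simp only [Prod.mk.injEq]
    rcases vec2 a b h1' with ⟨rfl,rfl⟩|⟨rfl,rfl⟩|⟨rfl,rfl⟩|⟨rfl,rfl⟩|⟨rfl,rfl⟩|⟨rfl,rfl⟩ <;>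
      rcases vec2 c d h3' with ⟨rfl,rfl⟩|⟨rfl,rfl⟩|⟨rfl,rfl⟩|⟨rfl,rfl⟩|⟨rfl,rfl⟩|⟨rfl,rfl⟩ <;>
      (norm_num at h2' <;> norm_num)
  · rintro (rfl|rfl|rfl|rfl|rfl|rfl|rfl|rfl|rfl|rfl|rfl|rfl) <;> refine ⟨?_,?_,?_⟩ <;> norm_num

lemma beta4 (k : ℕ) (hk : 3 ≤ k) (β : Fin 2 → ℤ) :
    Q12 k β β = 4 ↔ β = ![1, 0] ∨ β = -![1, 0] := by
  have hK : (3:ℤ) ≤ (k:ℤ) := by exact_mod_cast hk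
  constructor
  · intro h
    simp only [Q12] at h
    have hy : β 1 = 0 := by
      by_contra hy
      have h2 : 1 ≤ β 1 * β 1 := by rcases lt_or_gt_of_ne hy with h'|h' <;> nlinarith
      nlinarith [sq_nonneg (2*β 0 + β 1)]
    have h4 : 4*(β 0 * β 0) = 4*1 := by
      linear_combination h - (4*β 0 + 2*(k:ℤ)*β 1)*hy
    have hx := mul_self_eq_one_iff.mp (mul_left_cancel₀ (by norm_num : (4:ℤ) ≠ 0) h4)
    rcases hx with h1|h1
    · left; funext i; fin_cases i <;> simp [h1, hy]
    · right; funext i; fin_cases i <;> simp [h1, hy]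
  · rintro (rfl|rfl) <;> norm_num [Q12]

theorem stmt_12 (k : ℕ) (hk : 2 ≤ k) :
    (k = 2 → Nat.card {φ : (Fin 2 → ℤ) ≃ₗ[ℤ] (Fin 2 → ℤ) //
        ∀ x y, Q12 k (φ x) (φ y) = Q12 k x y} = 12) ∧
    (3 ≤ k → Nat.card {φ : (Fin 2 → ℤ) ≃ₗ[ℤ] (Fin 2 → ℤ) //
        ∀ x y, Q12 k (φ x) (φ y) = Q12 k x y} = 4 ∧
      ∀ β : Fin 2 → ℤ, Q12 k β β = 4 ↔ β = ![1, 0] ∨ β = -![1, 0]) := by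
  constructor
  · rintro rfl
    rw [Nat.card_congr (autEquiv 2 (by norm_num))]
    have h1 : Nat.card {p : ℤ × ℤ × ℤ × ℤ // EE 2 p}
        = Set.ncard {p : ℤ × ℤ × ℤ × ℤ | EE 2 p} := Nat.card_coe_set_eq _
    have hs : {p : ℤ × ℤ × ℤ × ℤ | EE 2 p} =
        ↑({(1,0,0,1),(1,0,1,-1),(0,1,1,0),(0,1,-1,1),(1,-1,1,0),(1,-1,0,-1),
           (-1,0,0,-1),(-1,0,-1,1),(0,-1,-1,0),(0,-1,1,-1),(-1,1,-1,0),(-1,1,0,1)} :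
          Finset (ℤ × ℤ × ℤ × ℤ)) := by
      ext p
      rw [Set.mem_setOf_eq, classify2]
      simp
    rw [h1, hs, Set.ncard_coe_finset]
    decide
  · intro hk3
    refine ⟨?_, beta4 k hk3⟩
    rw [Nat.card_congr (autEquiv k hk)]
    have h1 : Nat.card {p : ℤ × ℤ × ℤ × ℤ // EE k p}
        = Set.ncard {p : ℤ × ℤ × ℤ × ℤ | EE k p} := Nat.card_coe_set_eq _
    have hs : {p : ℤ × ℤ × ℤ × ℤ | EE k p} =
        ↑({(1,0,0,1),(1,0,1,-1),(-1,0,-1,1),(-1,0,0,-1)} : Finset (ℤ × ℤ × ℤ × ℤ)) := by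
      ext p
      rw [Set.mem_setOf_eq, classify3 k hk3]
      simp
    rw [h1, hs, Set.ncard_coe_finset]
    decide
end
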